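/- arXiv:2301.01716 — 7 statements merged into one kernel-verified Lean document; each statement's English description precedes it below -/
import Mathlib

section
/- Suppose the bilevel problem attains its optimal value, i.e., there exist x* ∈ X and y* ∈ Y with f̃(x*,y*) = inf_{z∈Y} f̃(x*,z) and f(x*,y*) = f*. Let ρ > 0 and ε > 0, and let (xε, yε, zε) ∈ X × Y × Y be an ε-optimal solution of the minimax problem min_{(x,y)∈X×Y} max_{z∈Y} P_ρ(x,y,z). Then f̃(xε,yε) ≤ inf_{z∈Y} f̃(xε,z) + ρ⁻¹(f* − f_low + 2ε) and f(xε,yε) ≤ f* + 2ε. -/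
noncomputable section

open Set

/-- Euclidean space `ℝⁿ`. -/
abbrev En (n : ℕ) := EuclideanSpace ℝ (Fin n)

/-- The penalty function `P_ρ(x,y,z) = f(x,y) + ρ (f̃(x,y) − f̃(x,z))`. -/
def Prho {n m : ℕ} (f ft : En n × En m → ℝ) (ρ : ℝ) (x : En n) (y z : En m) : ℝ :=
  f (x, y) + ρ * (ft (x, y) - ft (x, z))

/-- The lower-level optimal value `inf_{z ∈ Y} f̃(x,z)`. -/
def lowerVal {n m : ℕ} (ft : En n × En m → ℝ) (Y : Set (En m)) (x : En n) : ℝ :=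
  sInf {w | ∃ z ∈ Y, w = ft (x, z)}

/-- `f_low = inf { f(x,y) : (x,y) ∈ X × Y }`. -/
def fLow {n m : ℕ} (f : En n × En m → ℝ) (X : Set (En n)) (Y : Set (En m)) : ℝ :=
  sInf {v | ∃ x ∈ X, ∃ y ∈ Y, v = f (x, y)}

/-- The bilevel optimal value
`f* = inf { f(x,y) : x ∈ X, y ∈ Y, f̃(x,y) = inf_{z∈Y} f̃(x,z) }`. -/
def fStar {n m : ℕ} (f ft : En n × En m → ℝ) (X : Set (En n)) (Y : Set (En m)) : ℝ :=
  sInf {v | ∃ x ∈ X, ∃ y ∈ Y, ft (x, y) = lowerVal ft Y x ∧ v = f (x, y)}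

/-- `sup_{z ∈ Y} P_ρ(x,y,z)`. -/
def maxP {n m : ℕ} (f ft : En n × En m → ℝ) (Y : Set (En m)) (ρ : ℝ)
    (x : En n) (y : En m) : ℝ :=
  sSup {v | ∃ z ∈ Y, v = Prho f ft ρ x y z}

/-- `inf_{(x,y) ∈ X×Y} sup_{z ∈ Y} P_ρ(x,y,z)`. -/
def minimaxVal {n m : ℕ} (f ft : En n × En m → ℝ) (X : Set (En n)) (Y : Set (En m))
    (ρ : ℝ) : ℝ :=
  sInf {v | ∃ x ∈ X, ∃ y ∈ Y, v = maxP f ft Y ρ x y}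

/-- `(x,y,z)` is an ε-optimal solution of `min_{(x,y)∈X×Y} max_{z∈Y} P_ρ(x,y,z)`. -/
def epsOptimal {n m : ℕ} (f ft : En n × En m → ℝ) (X : Set (En n)) (Y : Set (En m))
    (ρ ε : ℝ) (x : En n) (y z : En m) : Prop :=
  maxP f ft Y ρ x y - Prho f ft ρ x y z ≤ ε ∧
  Prho f ft ρ x y z - minimaxVal f ft X Y ρ ≤ ε

theorem stmt0 {n m : ℕ} (hn : 0 < n) (hm : 0 < m)
    (X : Set (En n)) (Y : Set (En m))
    (hXne : X.Nonempty) (hXcpt : IsCompact X)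
    (hYne : Y.Nonempty) (hYcpt : IsCompact Y) (hYconv : Convex ℝ Y)
    (f ft : En n × En m → ℝ)
    (hfc : ContinuousOn f (X ×ˢ Y)) (hftc : ContinuousOn ft (X ×ˢ Y))
    (hftconv : ∀ x ∈ X, ConvexOn ℝ Y fun z => ft (x, z))
    -- the bilevel problem attains its optimal value
    (xstar : En n) (ystar : En m) (hxstar : xstar ∈ X) (hystar : ystar ∈ Y)
    (hopt1 : ft (xstar, ystar) = lowerVal ft Y xstar)
    (hopt2 : f (xstar, ystar) = fStar f ft X Y)
    (ρ ε : ℝ) (hρ : 0 < ρ) (hε : 0 < ε)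
    (xe : En n) (ye ze : En m) (hxe : xe ∈ X) (hye : ye ∈ Y) (hze : ze ∈ Y)
    (heps : epsOptimal f ft X Y ρ ε xe ye ze) :
    ft (xe, ye) ≤ lowerVal ft Y xe + ρ⁻¹ * (fStar f ft X Y - fLow f X Y + 2 * ε) ∧
    f (xe, ye) ≤ fStar f ft X Y + 2 * ε := by
  -- continuity of z ↦ ft (x, z) on Y
  have hftx : ∀ x ∈ X, ContinuousOn (fun z => ft (x, z)) Y := by
    intro x hx
    exact hftc.comp (Continuous.continuousOn (by continuity)) fun z hz => ⟨hx, hz⟩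
  have himg : ∀ x : En n, {w | ∃ z ∈ Y, w = ft (x, z)} = (fun z => ft (x, z)) '' Y := by
    intro x; ext w; simp [eq_comm]
  have hScpt : ∀ x ∈ X, IsCompact ((fun z => ft (x, z)) '' Y) := fun x hx =>
    hYcpt.image_of_continuousOn (hftx x hx)
  have hlow_le : ∀ x ∈ X, ∀ z ∈ Y, lowerVal ft Y x ≤ ft (x, z) := by
    intro x hx z hz
    rw [lowerVal, himg x]
    exact csInf_le (hScpt x hx).bddBelow ⟨z, hz, rfl⟩
  have hlow_att : ∀ x ∈ X, ∃ z ∈ Y, ft (x, z) = lowerVal ft Y x := by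
    intro x hx
    obtain ⟨z0, hz0, hmin⟩ := hYcpt.exists_isMinOn hYne (hftx x hx)
    refine ⟨z0, hz0, le_antisymm ?_ (hlow_le x hx z0 hz0)⟩
    rw [lowerVal, himg x]
    refine le_csInf (hYne.image _) ?_
    rintro w ⟨z, hz, rfl⟩
    exact hmin hz
  -- Prho continuity in z and maxP facts
  have hPimg : ∀ (x : En n) (y : En m),
      {v | ∃ z ∈ Y, v = Prho f ft ρ x y z} = (fun z => Prho f ft ρ x y z) '' Y := by
    intro x y; ext v; simp [eq_comm]
  have hPcpt : ∀ x ∈ X, ∀ y : En m, IsCompact ((fun z => Prho f ft ρ x y z) '' Y) := by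
    intro x hx y
    apply hYcpt.image_of_continuousOn
    simp only [Prho]
    exact continuousOn_const.add (continuousOn_const.mul
      (continuousOn_const.sub (hftx x hx)))
  have hP_le_max : ∀ x ∈ X, ∀ y : En m, ∀ z ∈ Y,
      Prho f ft ρ x y z ≤ maxP f ft Y ρ x y := by
    intro x hx y z hz
    rw [maxP, hPimg x y]
    exact le_csSup (hPcpt x hx y).bddAbove ⟨z, hz, rfl⟩
  -- fLow facts
  have hfimg : {v | ∃ x ∈ X, ∃ y ∈ Y, v = f (x, y)} = f '' (X ×ˢ Y) := by
    ext v
    constructor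
    · rintro ⟨x, hx, y, hy, rfl⟩; exact ⟨(x, y), ⟨hx, hy⟩, rfl⟩
    · rintro ⟨⟨x, y⟩, ⟨hx, hy⟩, rfl⟩; exact ⟨x, hx, y, hy, rfl⟩
  have hfcpt : IsCompact (f '' (X ×ˢ Y)) :=
    (hXcpt.prod hYcpt).image_of_continuousOn hfc
  have hfLow_le : ∀ x ∈ X, ∀ y ∈ Y, fLow f X Y ≤ f (x, y) := by
    intro x hx y hy
    rw [fLow, hfimg]
    exact csInf_le hfcpt.bddBelow ⟨(x, y), ⟨hx, hy⟩, rfl⟩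
  -- minimaxVal ≤ maxP at (x*, y*)
  have hmm_le : minimaxVal f ft X Y ρ ≤ maxP f ft Y ρ xstar ystar := by
    rw [minimaxVal]
    refine csInf_le ⟨fLow f X Y, ?_⟩ ⟨xstar, hxstar, ystar, hystar, rfl⟩
    rintro v ⟨x, hx, y, hy, rfl⟩
    have h1 : Prho f ft ρ x y y ≤ maxP f ft Y ρ x y := hP_le_max x hx y y hy
    have h2 : Prho f ft ρ x y y = f (x, y) := by simp [Prho]
    have := hfLow_le x hx y hy
    linarith
  -- maxP at (x*, y*) ≤ f*
  have hmaxstar : maxP f ft Y ρ xstar ystar ≤ fStar f ft X Y := by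
    rw [maxP]
    refine csSup_le ⟨Prho f ft ρ xstar ystar ystar, ystar, hystar, rfl⟩ ?_
    rintro v ⟨z, hz, rfl⟩
    have h1 : ft (xstar, ystar) - ft (xstar, z) ≤ 0 := by
      have := hlow_le xstar hxstar z hz
      linarith [hopt1 ▸ this]
    have h2 : ρ * (ft (xstar, ystar) - ft (xstar, z)) ≤ 0 :=
      mul_nonpos_of_nonneg_of_nonpos hρ.le h1
    simp only [Prho]
    linarith [hopt2]
  -- key chain
  obtain ⟨heps1, heps2⟩ := heps
  have hmaxchain : maxP f ft Y ρ xe ye ≤ fStar f ft X Y + 2 * ε := by linarith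
  obtain ⟨z0, hz0, hz0eq⟩ := hlow_att xe hxe
  have hkey : f (xe, ye) + ρ * (ft (xe, ye) - lowerVal ft Y xe) ≤ fStar f ft X Y + 2 * ε := by
    have h1 : Prho f ft ρ xe ye z0 ≤ maxP f ft Y ρ xe ye := hP_le_max xe hxe ye z0 hz0
    have h2 : Prho f ft ρ xe ye z0 = f (xe, ye) + ρ * (ft (xe, ye) - lowerVal ft Y xe) := by
      simp [Prho, hz0eq]
    linarith
  have hnn : 0 ≤ ρ * (ft (xe, ye) - lowerVal ft Y xe) :=
    mul_nonneg hρ.le (by linarith [hlow_le xe hxe ye hye])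
  constructor
  · have h2 : ρ * (ft (xe, ye) - lowerVal ft Y xe) ≤ fStar f ft X Y - fLow f X Y + 2 * ε := by
      linarith [hfLow_le xe hxe ye hye]
    have h3 : ft (xe, ye) - lowerVal ft Y xe ≤ (fStar f ft X Y - fLow f X Y + 2 * ε) / ρ :=
      (le_div_iff₀' hρ).mpr h2
    rw [div_eq_inv_mul] at h3
    linarith
  · linarith
end
end

section
/- Suppose the bilevel problem attains its optimal value, i.e., there exist x* ∈ X and y* ∈ Y with f̃(x*,y*) = inf_{z∈Y} f̃(x*,z) and f(x*,y*) = f*. Let (ρ_k) and (ε_k) be sequences of positive reals with ρ_k → ∞ and ε_k → 0, and for each k let (x^k, y^k, z^k) ∈ X × Y × Y be an ε_k-optimal solution of the minimax problem min_{(x,y)∈X×Y} max_{z∈Y} P_{ρ_k}(x,y,z). If (x^k, y^k) converges to a point (x̄, ȳ), then (x̄, ȳ) ∈ X × Y, f̃(x̄, ȳ) = inf_{z∈Y} f̃(x̄, z), and f(x̄, ȳ) = f*; that is, every accumulation point of (x^k, y^k) is an optimal solution of the bilevel problem. -/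
noncomputable section

open Set

open Filter in
theorem stmt1 {n m : ℕ} (hn : 0 < n) (hm : 0 < m)
    (X : Set (En n)) (Y : Set (En m))
    (hXne : X.Nonempty) (hXcpt : IsCompact X)
    (hYne : Y.Nonempty) (hYcpt : IsCompact Y) (hYconv : Convex ℝ Y)
    (f ft : En n × En m → ℝ)
    (hfc : ContinuousOn f (X ×ˢ Y)) (hftc : ContinuousOn ft (X ×ˢ Y))
    (hftconv : ∀ x ∈ X, ConvexOn ℝ Y fun z => ft (x, z))
    -- the bilevel problem attains its optimal value
    (xstar : En n) (ystar : En m) (hxstar : xstar ∈ X) (hystar : ystar ∈ Y)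
    (hopt1 : ft (xstar, ystar) = lowerVal ft Y xstar)
    (hopt2 : f (xstar, ystar) = fStar f ft X Y)
    (ρseq εseq : ℕ → ℝ)
    (hρpos : ∀ k, 0 < ρseq k) (hεpos : ∀ k, 0 < εseq k)
    (hρtend : Tendsto ρseq atTop atTop) (hεtend : Tendsto εseq atTop (nhds 0))
    (xseq : ℕ → En n) (yseq zseq : ℕ → En m)
    (hxseq : ∀ k, xseq k ∈ X) (hyseq : ∀ k, yseq k ∈ Y) (hzseq : ∀ k, zseq k ∈ Y)
    (hoptseq : ∀ k, epsOptimal f ft X Y (ρseq k) (εseq k) (xseq k) (yseq k) (zseq k))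
    (xbar : En n) (ybar : En m)
    (hconv : Tendsto (fun k => (xseq k, yseq k)) atTop (nhds (xbar, ybar))) :
    xbar ∈ X ∧ ybar ∈ Y ∧ ft (xbar, ybar) = lowerVal ft Y xbar ∧
      f (xbar, ybar) = fStar f ft X Y := by

  classical
  have hXYcpt : IsCompact (X ×ˢ Y) := hXcpt.prod hYcpt
  have hXYne : (X ×ˢ Y).Nonempty := hXne.prod hYne
  obtain ⟨p0, hp0mem, hp0⟩ := hXYcpt.exists_isMinOn hXYne hfc
  obtain ⟨q0, hq0mem, hq0⟩ := hXYcpt.exists_isMinOn hXYne hftc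
  set c : ℝ := f p0 with hc_def
  set cft : ℝ := ft q0 with hcft_def
  have hc : ∀ p ∈ X ×ˢ Y, c ≤ f p := fun p hp => hp0 hp
  have hcft : ∀ p ∈ X ×ˢ Y, cft ≤ ft p := fun p hp => hq0 hp
  -- boundedness of the inner sup sets
  have hPbdd : ∀ (ρ : ℝ), 0 < ρ → ∀ x ∈ X, ∀ y ∈ Y,
      BddAbove {v | ∃ z ∈ Y, v = Prho f ft ρ x y z} := by
    intro ρ hρ x hx y hy
    refine ⟨f (x, y) + ρ * (ft (x, y) - cft), ?_⟩
    rintro v ⟨z, hz, rfl⟩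
    have h1 : cft ≤ ft (x, z) := hcft _ ⟨hx, hz⟩
    have h2 : ρ * (ft (x, y) - ft (x, z)) ≤ ρ * (ft (x, y) - cft) :=
      mul_le_mul_of_nonneg_left (by linarith) hρ.le
    simp only [Prho]
    linarith
  have hPself : ∀ (ρ : ℝ) (x : En n) (y : En m), Prho f ft ρ x y y = f (x, y) := by
    intro ρ x y; simp [Prho]
  -- f (x,y) ≤ maxP
  have hmaxP_ge : ∀ (ρ : ℝ), 0 < ρ → ∀ x ∈ X, ∀ y ∈ Y, f (x, y) ≤ maxP f ft Y ρ x y := by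
    intro ρ hρ x hx y hy
    have := le_csSup (hPbdd ρ hρ x hx y hy) (show Prho f ft ρ x y y ∈ _ from ⟨y, hy, rfl⟩)
    rwa [hPself] at this
  -- minimax set bdd below
  have hMbdd : ∀ (ρ : ℝ), 0 < ρ →
      BddBelow {v | ∃ x ∈ X, ∃ y ∈ Y, v = maxP f ft Y ρ x y} := by
    intro ρ hρ
    refine ⟨c, ?_⟩
    rintro v ⟨x, hx, y, hy, rfl⟩
    exact le_trans (hc (x, y) ⟨hx, hy⟩) (hmaxP_ge ρ hρ x hx y hy)
  -- maxP at (x*, y*) is ≤ f*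
  have hstar : ∀ (ρ : ℝ), 0 < ρ → maxP f ft Y ρ xstar ystar ≤ fStar f ft X Y := by
    intro ρ hρ
    rw [← hopt2]
    refine csSup_le ⟨_, ystar, hystar, rfl⟩ ?_
    rintro v ⟨z, hz, rfl⟩
    have hb : BddBelow {w | ∃ z ∈ Y, w = ft (xstar, z)} := by
      refine ⟨cft, ?_⟩
      rintro w ⟨z', hz', rfl⟩
      exact hcft _ ⟨hxstar, hz'⟩
    have h1 : lowerVal ft Y xstar ≤ ft (xstar, z) := csInf_le hb ⟨z, hz, rfl⟩
    have h2 : ft (xstar, ystar) - ft (xstar, z) ≤ 0 := by rw [hopt1]; linarith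
    have h3 : ρ * (ft (xstar, ystar) - ft (xstar, z)) ≤ 0 :=
      mul_nonpos_of_nonneg_of_nonpos hρ.le h2
    simp only [Prho]
    linarith
  -- key inequality
  have hkey : ∀ k, ∀ z ∈ Y,
      Prho f ft (ρseq k) (xseq k) (yseq k) z ≤ fStar f ft X Y + 2 * εseq k := by
    intro k z hz
    have h := hoptseq k
    unfold epsOptimal at h
    obtain ⟨h1, h2⟩ := h
    have hle : Prho f ft (ρseq k) (xseq k) (yseq k) z ≤ maxP f ft Y (ρseq k) (xseq k) (yseq k) :=
      le_csSup (hPbdd _ (hρpos k) _ (hxseq k) _ (hyseq k)) ⟨z, hz, rfl⟩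
    have hmin : minimaxVal f ft X Y (ρseq k) ≤ fStar f ft X Y := by
      refine le_trans (csInf_le (hMbdd _ (hρpos k)) ⟨xstar, hxstar, ystar, hystar, rfl⟩)
        (hstar _ (hρpos k))
    linarith
  -- limit membership
  have hxt : Tendsto xseq atTop (nhds xbar) :=
    ((continuous_fst.tendsto (xbar, ybar)).comp hconv : _)
  have hyt : Tendsto yseq atTop (nhds ybar) :=
    ((continuous_snd.tendsto (xbar, ybar)).comp hconv : _)
  have hxbar : xbar ∈ X := hXcpt.isClosed.mem_of_tendsto hxt (Eventually.of_forall hxseq)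
  have hybar : ybar ∈ Y := hYcpt.isClosed.mem_of_tendsto hyt (Eventually.of_forall hyseq)
  have hconvW : Tendsto (fun k => (xseq k, yseq k)) atTop (nhdsWithin (xbar, ybar) (X ×ˢ Y)) :=
    tendsto_nhdsWithin_of_tendsto_nhds_of_eventually_within _ hconv
      (Eventually.of_forall fun k => ⟨hxseq k, hyseq k⟩)
  have hfT : Tendsto (fun k => f (xseq k, yseq k)) atTop (nhds (f (xbar, ybar))) :=
    Filter.Tendsto.comp (hfc (xbar, ybar) ⟨hxbar, hybar⟩) hconvW
  have hftT : Tendsto (fun k => ft (xseq k, yseq k)) atTop (nhds (ft (xbar, ybar))) :=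
    Filter.Tendsto.comp (hftc (xbar, ybar) ⟨hxbar, hybar⟩) hconvW
  -- feasibility of the limit
  have hfeas_le : ∀ z ∈ Y, ft (xbar, ybar) ≤ ft (xbar, z) := by
    intro z hz
    have hzt : Tendsto (fun k => ((xseq k : En n), (z : En m))) atTop
        (nhdsWithin (xbar, z) (X ×ˢ Y)) := by
      refine tendsto_nhdsWithin_of_tendsto_nhds_of_eventually_within _ ?_
        (Eventually.of_forall fun k => ⟨hxseq k, hz⟩)
      exact hxt.prodMk_nhds tendsto_const_nhds
    have hftzT : Tendsto (fun k => ft (xseq k, z)) atTop (nhds (ft (xbar, z))) :=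
      Filter.Tendsto.comp (hftc (xbar, z) ⟨hxbar, hz⟩) hzt
    -- d_k ≤ (f* + 2 ε_k - f(x_k,y_k)) / ρ_k
    have hdle : ∀ k, ft (xseq k, yseq k) - ft (xseq k, z) ≤
        (fStar f ft X Y + 2 * εseq k - f (xseq k, yseq k)) * (ρseq k)⁻¹ := by
      intro k
      have h := hkey k z hz
      simp only [Prho] at h
      have hρ := hρpos k
      have : ρseq k * (ft (xseq k, yseq k) - ft (xseq k, z)) ≤
          fStar f ft X Y + 2 * εseq k - f (xseq k, yseq k) := by linarith
      have h2 := mul_le_mul_of_nonneg_right this (inv_nonneg.mpr hρ.le)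
      rw [mul_comm (ρseq k), mul_assoc, mul_inv_cancel₀ hρ.ne', mul_one] at h2
      linarith
    have hL : Tendsto (fun k => ft (xseq k, yseq k) - ft (xseq k, z)) atTop
        (nhds (ft (xbar, ybar) - ft (xbar, z))) := hftT.sub hftzT
    have hnum : Tendsto (fun k => fStar f ft X Y + 2 * εseq k - f (xseq k, yseq k)) atTop
        (nhds (fStar f ft X Y - f (xbar, ybar))) := by
      have h1 : Tendsto (fun k => fStar f ft X Y + 2 * εseq k - f (xseq k, yseq k)) atTop
          (nhds (fStar f ft X Y + 2 * 0 - f (xbar, ybar))) :=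
        (tendsto_const_nhds.add (hεtend.const_mul 2)).sub hfT
      simpa using h1
    have hinv : Tendsto (fun k => (ρseq k)⁻¹) atTop (nhds (0 : ℝ)) :=
      tendsto_inv_atTop_zero.comp hρtend
    have hR : Tendsto (fun k => (fStar f ft X Y + 2 * εseq k - f (xseq k, yseq k)) * (ρseq k)⁻¹)
        atTop (nhds 0) := by
      have := hnum.mul hinv
      simpa using this
    have := le_of_tendsto_of_tendsto' hL hR hdle
    linarith
  have hfeas : ft (xbar, ybar) = lowerVal ft Y xbar := by
    refine le_antisymm ?_ ?_
    · refine le_csInf ⟨_, ybar, hybar, rfl⟩ ?_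
      rintro w ⟨z, hz, rfl⟩
      exact hfeas_le z hz
    · refine csInf_le ⟨ft (xbar, ybar), ?_⟩ ⟨ybar, hybar, rfl⟩
      rintro w ⟨z, hz, rfl⟩
      exact hfeas_le z hz
  refine ⟨hxbar, hybar, hfeas, le_antisymm ?_ ?_⟩
  · -- f(x̄,ȳ) ≤ f*
    have hle2 : ∀ k, f (xseq k, yseq k) ≤ fStar f ft X Y + 2 * εseq k := by
      intro k
      have := hkey k (yseq k) (hyseq k)
      rwa [hPself] at this
    have hR : Tendsto (fun k => fStar f ft X Y + 2 * εseq k) atTop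
        (nhds (fStar f ft X Y)) := by
      have h1 : Tendsto (fun k => fStar f ft X Y + 2 * εseq k) atTop
          (nhds (fStar f ft X Y + 2 * 0)) :=
        tendsto_const_nhds.add (hεtend.const_mul 2)
      simpa using h1
    exact le_of_tendsto_of_tendsto' hfT hR hle2
  · -- f* ≤ f(x̄,ȳ)
    refine csInf_le ⟨c, ?_⟩ ⟨xbar, hxbar, ybar, hybar, hfeas, rfl⟩
    rintro v ⟨x, hx, y, hy, _, rfl⟩
    exact hc (x, y) ⟨hx, hy⟩
end
end

section
/- Let ρ, μ, ε > 0. Suppose the penalized bilevel problem attains its optimal value, i.e., there exist x* ∈ X and y* ∈ Y with P̃_μ(x*,y*) = inf_{z∈Y} P̃_μ(x*,z) and f(x*,y*) = f*_μ. If (xε, yε, zε) ∈ X × Y × Y is an ε-optimal solution of the minimax problem min_{(x,y)∈X×Y} max_{z∈Y} P_{ρ,μ}(x,y,z), then P̃_μ(xε,yε) ≤ inf_{z∈Y} P̃_μ(xε,z) + ρ⁻¹(f*_μ − f_low + 2ε) and f(xε,yε) ≤ f*_μ + 2ε. -/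
noncomputable section

open Set

open scoped RealInnerProductSpace

/-- Componentwise positive part `[v]₊` of a vector `v ∈ ℝˡ`. -/
def posPart {l : ℕ} (v : En l) : En l := WithLp.toLp 2 (fun i => max (v i) 0)

/-- The Euclidean distance `‖(x,y) − (x',y')‖` on `ℝⁿ × ℝᵐ`. -/
def prodDist {n m : ℕ} (p q : En n × En m) : ℝ :=
  Real.sqrt (‖p.1 - q.1‖ ^ 2 + ‖p.2 - q.2‖ ^ 2)

/-- `φ` is `L`-Lipschitz on `X × Y` (with the Euclidean norm on `ℝⁿ × ℝᵐ`). -/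
def LipOnXY {n m : ℕ} (φ : En n × En m → ℝ) (L : ℝ)
    (X : Set (En n)) (Y : Set (En m)) : Prop :=
  ∀ p ∈ X ×ˢ Y, ∀ q ∈ X ×ˢ Y, |φ p - φ q| ≤ L * prodDist p q

/-- The Slater condition with constant `G`. -/
def Slater {n m l : ℕ} (gt : En n × En m → En l) (X : Set (En n)) (Y : Set (En m))
    (G : ℝ) : Prop :=
  ∀ x ∈ X, ∃ zhat ∈ Y, ∀ i, gt (x, zhat) i ≤ -G

/-- The lower-level value function `f̃*(x) = inf { f̃(x,z) : z ∈ Y, g̃(x,z) ≤ 0 }`. -/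
def ftStar {n m l : ℕ} (ft : En n × En m → ℝ) (gt : En n × En m → En l)
    (Y : Set (En m)) (x : En n) : ℝ :=
  sInf {v | ∃ z ∈ Y, (∀ i, gt (x, z) i ≤ 0) ∧ v = ft (x, z)}

/-- `f̃*_hi = sup_{x ∈ X} f̃*(x)`. -/
def ftStarHi {n m l : ℕ} (ft : En n × En m → ℝ) (gt : En n × En m → En l)
    (X : Set (En n)) (Y : Set (En m)) : ℝ :=
  sSup {v | ∃ x ∈ X, v = ftStar ft gt Y x}

/-- `f̃_low = inf { f̃(x,y) : (x,y) ∈ X × Y }`. -/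
def ftLow {n m : ℕ} (ft : En n × En m → ℝ) (X : Set (En n)) (Y : Set (En m)) : ℝ :=
  sInf {v | ∃ x ∈ X, ∃ y ∈ Y, v = ft (x, y)}

/-- `f̃_hi = sup { f̃(x,y) : (x,y) ∈ X × Y }`. -/
def ftHi {n m : ℕ} (ft : En n × En m → ℝ) (X : Set (En n)) (Y : Set (En m)) : ℝ :=
  sSup {v | ∃ x ∈ X, ∃ y ∈ Y, v = ft (x, y)}

/-- `g̃_hi = sup { ‖g̃(x,y)‖ : (x,y) ∈ X × Y }`. -/
def gtHi {n m l : ℕ} (gt : En n × En m → En l) (X : Set (En n)) (Y : Set (En m)) : ℝ :=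
  sSup {v | ∃ x ∈ X, ∃ y ∈ Y, v = ‖gt (x, y)‖}

/-- The lower-level penalty function `P̃_μ(x,z) = f̃(x,z) + μ ‖[g̃(x,z)]₊‖²`. -/
def Ptilde {n m l : ℕ} (ft : En n × En m → ℝ) (gt : En n × En m → En l)
    (μ : ℝ) (x : En n) (z : En m) : ℝ :=
  ft (x, z) + μ * ‖posPart (gt (x, z))‖ ^ 2

/-- `inf_{z ∈ Y} P̃_μ(x,z)`. -/
def PtildeMinVal {n m l : ℕ} (ft : En n × En m → ℝ) (gt : En n × En m → En l)
    (Y : Set (En m)) (μ : ℝ) (x : En n) : ℝ :=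
  sInf {w | ∃ z ∈ Y, w = Ptilde ft gt μ x z}

/-- The minimax penalty function `P_{ρ,μ}(x,y,z) = f(x,y) + ρ (P̃_μ(x,y) − P̃_μ(x,z))`. -/
def Prhomu {n m l : ℕ} (f ft : En n × En m → ℝ) (gt : En n × En m → En l)
    (ρ μ : ℝ) (x : En n) (y z : En m) : ℝ :=
  f (x, y) + ρ * (Ptilde ft gt μ x y - Ptilde ft gt μ x z)

/-- `sup_{z ∈ Y} P_{ρ,μ}(x,y,z)`. -/
def maxPc {n m l : ℕ} (f ft : En n × En m → ℝ) (gt : En n × En m → En l)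
    (Y : Set (En m)) (ρ μ : ℝ) (x : En n) (y : En m) : ℝ :=
  sSup {v | ∃ z ∈ Y, v = Prhomu f ft gt ρ μ x y z}

/-- `inf_{(x,y)∈X×Y} sup_{z∈Y} P_{ρ,μ}(x,y,z)`. -/
def minimaxValc {n m l : ℕ} (f ft : En n × En m → ℝ) (gt : En n × En m → En l)
    (X : Set (En n)) (Y : Set (En m)) (ρ μ : ℝ) : ℝ :=
  sInf {v | ∃ x ∈ X, ∃ y ∈ Y, v = maxPc f ft gt Y ρ μ x y}

/-- `(x,y,z)` is an ε-optimal solution of `min_{(x,y)∈X×Y} max_{z∈Y} P_{ρ,μ}(x,y,z)`. -/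
def epsOptimalc {n m l : ℕ} (f ft : En n × En m → ℝ) (gt : En n × En m → En l)
    (X : Set (En n)) (Y : Set (En m)) (ρ μ ε : ℝ) (x : En n) (y z : En m) : Prop :=
  maxPc f ft gt Y ρ μ x y - Prhomu f ft gt ρ μ x y z ≤ ε ∧
  Prhomu f ft gt ρ μ x y z - minimaxValc f ft gt X Y ρ μ ≤ ε

/-- The constrained bilevel optimal value
`f* = inf { f(x,y) : x ∈ X, y ∈ Y, g̃(x,y) ≤ 0, f̃(x,y) = f̃*(x) }`. -/
def fStarC {n m l : ℕ} (f ft : En n × En m → ℝ) (gt : En n × En m → En l)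
    (X : Set (En n)) (Y : Set (En m)) : ℝ :=
  sInf {v | ∃ x ∈ X, ∃ y ∈ Y,
    (∀ i, gt (x, y) i ≤ 0) ∧ ft (x, y) = ftStar ft gt Y x ∧ v = f (x, y)}

/-- The penalized bilevel optimal value
`f*_μ = inf { f(x,y) : x ∈ X, y ∈ Y, P̃_μ(x,y) = inf_{z∈Y} P̃_μ(x,z) }`. -/
def fStarMu {n m l : ℕ} (f ft : En n × En m → ℝ) (gt : En n × En m → En l)
    (X : Set (En n)) (Y : Set (En m)) (μ : ℝ) : ℝ :=
  sInf {v | ∃ x ∈ X, ∃ y ∈ Y, Ptilde ft gt μ x y = PtildeMinVal ft gt Y μ x ∧ v = f (x, y)}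

/-- The set `S_θ(x)` of θ-approximately feasible lower-level minimizers. -/
def Sθ {n m l : ℕ} (ft : En n × En m → ℝ) (gt : En n × En m → En l)
    (Y : Set (En m)) (θ : ℝ) (x : En n) : Set (En m) :=
  {z | z ∈ Y ∧ ‖posPart (gt (x, z))‖ ≤ θ ∧
    ft (x, z) = sInf {w | ∃ z' ∈ Y, ‖posPart (gt (x, z'))‖ ≤ θ ∧ w = ft (x, z')}}

/-- The error-bound assumption with constants `θbar` and function `ω`. -/
def ErrorBound {n m l : ℕ} (ft : En n × En m → ℝ) (gt : En n × En m → En l)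
    (X : Set (En n)) (Y : Set (En m)) (θbar : ℝ) (ω : ℝ → ℝ) : Prop :=
  0 < θbar ∧ (∀ t, 0 ≤ t → 0 ≤ ω t) ∧ (∀ a b, 0 ≤ a → a ≤ b → ω a ≤ ω b) ∧
    Filter.Tendsto ω (nhdsWithin 0 (Set.Ioi 0)) (nhds 0) ∧
    ∀ x ∈ X, ∀ z ∈ Sθ ft gt Y 0 x, ∀ θ ∈ Set.Icc 0 θbar,
      Metric.infDist z (Sθ ft gt Y θ x) ≤ ω θ

/-! Along the diagonal `z = y` the minimax penalty is just `f(x,y)`, so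
`sup_z P_{ρ,μ}(x,y,z) ≥ f(x,y)`, with equality at a lower-level solution. Hence the minimax
value is at most `f*_μ`, and an `ε`-optimal point satisfies `P_{ρ,μ}(xε,yε,z) ≤ f*_μ + 2ε` for
every `z ∈ Y`. Taking `z = yε` bounds `f(xε,yε)`; for general `z`, using `f(xε,yε) ≥ f_low`,
it bounds `ρ (P̃_μ(xε,yε) − P̃_μ(xε,z))`. -/

section MinimaxPenalty

variable {n m l : ℕ} {f ft : En n × En m → ℝ} {gt : En n × En m → En l}
  {X : Set (En n)} {Y : Set (En m)} {ρ μ ε : ℝ}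

theorem continuousOn_Ptilde (hftc : ContinuousOn ft (X ×ˢ Y))
    (hgtc : ContinuousOn gt (X ×ˢ Y)) :
    ContinuousOn (fun p : En n × En m => Ptilde ft gt μ p.1 p.2) (X ×ˢ Y) := by
  have hpos : Continuous (posPart : En l → En l) :=
    (PiLp.continuous_toLp 2 _).comp <| continuous_pi fun i =>
      ((continuous_apply i).comp (PiLp.continuous_ofLp 2 _)).max continuous_const
  unfold Ptilde
  exact hftc.add <| continuousOn_const.mul ((hpos.comp_continuousOn hgtc).norm.pow 2)

theorem bddBelow_Ptilde_of_isCompact (hXcpt : IsCompact X) (hYcpt : IsCompact Y)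
    (hftc : ContinuousOn ft (X ×ˢ Y)) (hgtc : ContinuousOn gt (X ×ˢ Y)) {x : En n}
    (hx : x ∈ X) :
    BddBelow {w | ∃ z ∈ Y, w = Ptilde ft gt μ x z} := by
  obtain ⟨b, hb⟩ := (hXcpt.prod hYcpt).bddBelow_image (continuousOn_Ptilde (μ := μ) hftc hgtc)
  exact ⟨b, by rintro w ⟨z, hz, rfl⟩; exact hb ⟨(x, z), ⟨hx, hz⟩, rfl⟩⟩

theorem Prhomu_self (x : En n) (y : En m) : Prhomu f ft gt ρ μ x y y = f (x, y) := by
  simp [Prhomu]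

theorem bddAbove_Prhomu (hρ : 0 ≤ ρ) {x : En n}
    (hP : BddBelow {w | ∃ z ∈ Y, w = Ptilde ft gt μ x z}) (y : En m) :
    BddAbove {v | ∃ z ∈ Y, v = Prhomu f ft gt ρ μ x y z} := by
  obtain ⟨b, hb⟩ := hP
  refine ⟨f (x, y) + ρ * (Ptilde ft gt μ x y - b), ?_⟩
  rintro v ⟨z, hz, rfl⟩
  have hbz : b ≤ Ptilde ft gt μ x z := hb ⟨z, hz, rfl⟩
  unfold Prhomu
  gcongr

theorem Prhomu_le_maxPc (hρ : 0 ≤ ρ) {x : En n}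
    (hP : BddBelow {w | ∃ z ∈ Y, w = Ptilde ft gt μ x z}) (y : En m) {z : En m}
    (hz : z ∈ Y) : Prhomu f ft gt ρ μ x y z ≤ maxPc f ft gt Y ρ μ x y :=
  le_csSup (bddAbove_Prhomu hρ hP y) ⟨z, hz, rfl⟩

theorem le_maxPc (hρ : 0 ≤ ρ) {x : En n}
    (hP : BddBelow {w | ∃ z ∈ Y, w = Ptilde ft gt μ x z}) {y : En m} (hy : y ∈ Y) :
    f (x, y) ≤ maxPc f ft gt Y ρ μ x y := by
  simpa only [Prhomu_self] using Prhomu_le_maxPc (f := f) hρ hP y hy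

theorem maxPc_eq_of_isMin (hρ : 0 ≤ ρ) {x : En n}
    (hP : BddBelow {w | ∃ z ∈ Y, w = Ptilde ft gt μ x z}) {y : En m} (hy : y ∈ Y)
    (hmin : Ptilde ft gt μ x y = PtildeMinVal ft gt Y μ x) :
    maxPc f ft gt Y ρ μ x y = f (x, y) := by
  refine le_antisymm (csSup_le ⟨_, y, hy, rfl⟩ ?_) (le_maxPc hρ hP hy)
  rintro v ⟨z, hz, rfl⟩
  have hyz : Ptilde ft gt μ x y ≤ Ptilde ft gt μ x z := hmin ▸ csInf_le hP ⟨z, hz, rfl⟩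
  have := mul_nonpos_of_nonneg_of_nonpos hρ (sub_nonpos.2 hyz)
  unfold Prhomu
  linarith

theorem minimaxValc_le_of_isMin (hρ : 0 ≤ ρ) (hf : BddBelow (f '' X ×ˢ Y))
    (hP : ∀ x ∈ X, BddBelow {w | ∃ z ∈ Y, w = Ptilde ft gt μ x z})
    {x : En n} {y : En m} (hx : x ∈ X) (hy : y ∈ Y)
    (hmin : Ptilde ft gt μ x y = PtildeMinVal ft gt Y μ x) :
    minimaxValc f ft gt X Y ρ μ ≤ f (x, y) := by
  obtain ⟨b, hb⟩ := hf
  have hbdd : BddBelow {v | ∃ x ∈ X, ∃ y ∈ Y, v = maxPc f ft gt Y ρ μ x y} := by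
    refine ⟨b, ?_⟩
    rintro v ⟨x', hx', y', hy', rfl⟩
    exact (hb ⟨(x', y'), ⟨hx', hy'⟩, rfl⟩).trans (le_maxPc hρ (hP x' hx') hy')
  exact (csInf_le hbdd ⟨x, hx, y, hy, rfl⟩).trans_eq (maxPc_eq_of_isMin hρ (hP x hx) hy hmin)

theorem fLow_le (hf : BddBelow (f '' X ×ˢ Y)) {x : En n} {y : En m} (hx : x ∈ X)
    (hy : y ∈ Y) : fLow f X Y ≤ f (x, y) := by
  obtain ⟨b, hb⟩ := hf
  refine csInf_le ⟨b, ?_⟩ ⟨x, hx, y, hy, rfl⟩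
  rintro v ⟨x', hx', y', hy', rfl⟩
  exact hb ⟨(x', y'), ⟨hx', hy'⟩, rfl⟩

theorem Prhomu_le_of_epsOptimalc (hρ : 0 ≤ ρ) {x : En n} {y z : En m}
    (hP : BddBelow {w | ∃ z ∈ Y, w = Ptilde ft gt μ x z})
    (heps : epsOptimalc f ft gt X Y ρ μ ε x y z) {c : ℝ}
    (hc : minimaxValc f ft gt X Y ρ μ ≤ c)
    {z' : En m} (hz' : z' ∈ Y) : Prhomu f ft gt ρ μ x y z' ≤ c + 2 * ε := by
  have := Prhomu_le_maxPc (f := f) hρ hP y hz'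
  linarith [heps.1, heps.2]

theorem Ptilde_le_PtildeMinVal_add (hρ : 0 < ρ) {x : En n} {y : En m} (hy : y ∈ Y) {b : ℝ}
    (hb : ∀ z ∈ Y, Prhomu f ft gt ρ μ x y z ≤ b) :
    Ptilde ft gt μ x y ≤ PtildeMinVal ft gt Y μ x + ρ⁻¹ * (b - f (x, y)) := by
  rw [← sub_le_iff_le_add]
  refine le_csInf ⟨_, y, hy, rfl⟩ ?_
  rintro w ⟨z, hz, rfl⟩
  have hgap : Ptilde ft gt μ x y - Ptilde ft gt μ x z ≤ ρ⁻¹ * (b - f (x, y)) := by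
    rw [le_inv_mul_iff₀ hρ]
    have := hb z hz
    unfold Prhomu at this
    linarith
  linarith

end MinimaxPenalty

theorem stmt8_general {n m l : ℕ}
    (X : Set (En n)) (Y : Set (En m))
    (hXcpt : IsCompact X)
    (hYcpt : IsCompact Y)
    (f ft : En n × En m → ℝ) (gt : En n × En m → En l)
    (hfc : ContinuousOn f (X ×ˢ Y)) (hftc : ContinuousOn ft (X ×ˢ Y))
    (hgtc : ContinuousOn gt (X ×ˢ Y))
    (ρ μ ε : ℝ) (hρ : 0 < ρ)
    -- the penalized bilevel problem attains its optimal value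
    (xstar : En n) (ystar : En m) (hxstar : xstar ∈ X) (hystar : ystar ∈ Y)
    (hopt1 : Ptilde ft gt μ xstar ystar = PtildeMinVal ft gt Y μ xstar)
    (hopt2 : f (xstar, ystar) = fStarMu f ft gt X Y μ)
    (xe : En n) (ye ze : En m) (hxe : xe ∈ X) (hye : ye ∈ Y)
    (heps : epsOptimalc f ft gt X Y ρ μ ε xe ye ze) :
    Ptilde ft gt μ xe ye ≤
        PtildeMinVal ft gt Y μ xe + ρ⁻¹ * (fStarMu f ft gt X Y μ - fLow f X Y + 2 * ε) ∧
    f (xe, ye) ≤ fStarMu f ft gt X Y μ + 2 * ε := by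
  have hf : BddBelow (f '' X ×ˢ Y) := (hXcpt.prod hYcpt).bddBelow_image hfc
  have hP : ∀ x ∈ X, BddBelow {w | ∃ z ∈ Y, w = Ptilde ft gt μ x z} := fun x hx =>
    bddBelow_Ptilde_of_isCompact hXcpt hYcpt hftc hgtc hx
  have hval : minimaxValc f ft gt X Y ρ μ ≤ fStarMu f ft gt X Y μ :=
    (minimaxValc_le_of_isMin hρ.le hf hP hxstar hystar hopt1).trans_eq hopt2
  have hall := fun z (hz : z ∈ Y) => Prhomu_le_of_epsOptimalc hρ.le (hP xe hxe) heps hval hz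
  refine ⟨(Ptilde_le_PtildeMinVal_add hρ hye hall).trans ?_, ?_⟩
  · gcongr
    linarith [fLow_le hf hxe hye]
  · simpa only [Prhomu_self] using hall ye hye

theorem stmt8 {n m l : ℕ} (hn : 0 < n) (hm : 0 < m) (hl : 0 < l)
    (X : Set (En n)) (Y : Set (En m))
    (hXne : X.Nonempty) (hXcpt : IsCompact X)
    (hYne : Y.Nonempty) (hYcpt : IsCompact Y) (hYconv : Convex ℝ Y)
    (f ft : En n × En m → ℝ) (gt : En n × En m → En l)
    (hfc : ContinuousOn f (X ×ˢ Y)) (hftc : ContinuousOn ft (X ×ˢ Y))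
    (hgtc : ContinuousOn gt (X ×ˢ Y))
    (hftconv : ∀ x ∈ X, ConvexOn ℝ Y fun z => ft (x, z))
    (hgtconv : ∀ x ∈ X, ∀ i, ConvexOn ℝ Y fun z => gt (x, z) i)
    (ρ μ ε : ℝ) (hρ : 0 < ρ) (hμ : 0 < μ) (hε : 0 < ε)
    -- the penalized bilevel problem attains its optimal value
    (xstar : En n) (ystar : En m) (hxstar : xstar ∈ X) (hystar : ystar ∈ Y)
    (hopt1 : Ptilde ft gt μ xstar ystar = PtildeMinVal ft gt Y μ xstar)
    (hopt2 : f (xstar, ystar) = fStarMu f ft gt X Y μ)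
    (xe : En n) (ye ze : En m) (hxe : xe ∈ X) (hye : ye ∈ Y) (hze : ze ∈ Y)
    (heps : epsOptimalc f ft gt X Y ρ μ ε xe ye ze) :
    Ptilde ft gt μ xe ye ≤
        PtildeMinVal ft gt Y μ xe + ρ⁻¹ * (fStarMu f ft gt X Y μ - fLow f X Y + 2 * ε) ∧
    f (xe, ye) ≤ fStarMu f ft gt X Y μ + 2 * ε :=
  stmt8_general X Y hXcpt hYcpt f ft gt hfc hftc hgtc ρ μ ε hρ xstar ystar hxstar hystar hopt1 hopt2
    xe ye ze hxe hye heps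
end
end

section
/- Assume f̃*_hi = sup_{x∈X} f̃*(x) is finite. Let μ > 0, x ∈ X, and let z* ∈ Y satisfy P̃_μ(x,z*) = inf_{z∈Y} P̃_μ(x,z). Then ‖[g̃(x,z*)]₊‖² ≤ μ⁻¹( f̃*_hi − f̃_low ). -/
noncomputable section

open Set

open scoped RealInnerProductSpace

/-! At a minimizer `z*` of the penalty, `μ‖[g̃(x,z*)]₊‖² = P̃_μ(x,z*) − f̃(x,z*)`. The penalty
vanishes at feasible points, so its minimum over `Y` is at most `f̃*(x) ≤ f̃*_hi`, while
`f̃(x,z*) ≥ f̃_low`. -/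

section Penalty

variable {n m l : ℕ} {X : Set (En n)} {Y : Set (En m)}
  {ft : En n × En m → ℝ} {gt : En n × En m → En l}

theorem posPart_eq_zero_of_forall_nonpos {v : En l} (hv : ∀ i, v i ≤ 0) : posPart v = 0 :=
  WithLp.ofLp_injective 2 (funext fun i => max_eq_right (hv i))

theorem Ptilde_eq_of_feasible {μ : ℝ} {x : En n} {z : En m} (hz : ∀ i, gt (x, z) i ≤ 0) :
    Ptilde ft gt μ x z = ft (x, z) := by
  simp [Ptilde, posPart_eq_zero_of_forall_nonpos hz]

theorem ftLow_le (hX : IsCompact X) (hY : IsCompact Y) (hft : ContinuousOn ft (X ×ˢ Y))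
    {x : En n} {y : En m} (hx : x ∈ X) (hy : y ∈ Y) : ftLow ft X Y ≤ ft (x, y) := by
  have hbdd : BddBelow {v | ∃ x ∈ X, ∃ y ∈ Y, v = ft (x, y)} :=
    ((hX.prod hY).image_of_continuousOn hft).bddBelow.mono <| by
      rintro v ⟨a, ha, b, hb, rfl⟩
      exact ⟨(a, b), ⟨ha, hb⟩, rfl⟩
  exact csInf_le hbdd ⟨x, hx, y, hy, rfl⟩

theorem ftLow_le_Ptilde (hX : IsCompact X) (hY : IsCompact Y) (hft : ContinuousOn ft (X ×ˢ Y))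
    {μ : ℝ} (hμ : 0 ≤ μ) {x : En n} {z : En m} (hx : x ∈ X) (hz : z ∈ Y) :
    ftLow ft X Y ≤ Ptilde ft gt μ x z := by
  have hpen : 0 ≤ μ * ‖posPart (gt (x, z))‖ ^ 2 := by positivity
  have := ftLow_le hX hY hft hx hz
  unfold Ptilde
  linarith

theorem PtildeMinVal_le_ftStar {μ : ℝ} {x : En n}
    (hbdd : BddBelow {w | ∃ z ∈ Y, w = Ptilde ft gt μ x z})
    (hfeas : ∃ z ∈ Y, ∀ i, gt (x, z) i ≤ 0) :
    PtildeMinVal ft gt Y μ x ≤ ftStar ft gt Y x := by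
  obtain ⟨z₀, hz₀, hg₀⟩ := hfeas
  refine le_csInf ⟨ft (x, z₀), z₀, hz₀, hg₀, rfl⟩ ?_
  rintro v ⟨z, hz, hg, rfl⟩
  rw [← Ptilde_eq_of_feasible (ft := ft) (μ := μ) hg]
  exact csInf_le hbdd ⟨z, hz, rfl⟩

end Penalty

theorem stmt9_general {n m l : ℕ}
    (X : Set (En n)) (Y : Set (En m))
    (hXcpt : IsCompact X) (hYcpt : IsCompact Y)
    (ft : En n × En m → ℝ) (gt : En n × En m → En l)
    (hftc : ContinuousOn ft (X ×ˢ Y))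
    (hfeas : ∀ x ∈ X, ∃ z ∈ Y, ∀ i, gt (x, z) i ≤ 0)
    -- `f̃*_hi` is finite
    (hbdd : BddAbove {v | ∃ x ∈ X, v = ftStar ft gt Y x})
    (μ : ℝ) (hμ : 0 < μ)
    (x : En n) (hx : x ∈ X)
    (zstar : En m) (hzstar : zstar ∈ Y)
    (hmin : Ptilde ft gt μ x zstar = PtildeMinVal ft gt Y μ x) :
    ‖posPart (gt (x, zstar))‖ ^ 2 ≤ μ⁻¹ * (ftStarHi ft gt X Y - ftLow ft X Y) := by
  have hPbdd : BddBelow {w | ∃ z ∈ Y, w = Ptilde ft gt μ x z} := by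
    refine ⟨ftLow ft X Y, ?_⟩
    rintro w ⟨z, hz, rfl⟩
    exact ftLow_le_Ptilde hXcpt hYcpt hftc hμ.le hx hz
  have hval : μ * ‖posPart (gt (x, zstar))‖ ^ 2 = PtildeMinVal ft gt Y μ x - ft (x, zstar) := by
    rw [← hmin, Ptilde]; ring
  rw [le_inv_mul_iff₀ hμ, hval]
  gcongr ?_ - ?_
  · exact (PtildeMinVal_le_ftStar hPbdd (hfeas x hx)).trans (le_csSup hbdd ⟨x, hx, rfl⟩)
  · exact ftLow_le hXcpt hYcpt hftc hx hzstar

theorem stmt9 {n m l : ℕ} (hn : 0 < n) (hm : 0 < m) (hl : 0 < l)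
    (X : Set (En n)) (Y : Set (En m))
    (hXne : X.Nonempty) (hXcpt : IsCompact X)
    (hYne : Y.Nonempty) (hYcpt : IsCompact Y) (hYconv : Convex ℝ Y)
    (ft : En n × En m → ℝ) (gt : En n × En m → En l)
    (hftc : ContinuousOn ft (X ×ˢ Y)) (hgtc : ContinuousOn gt (X ×ˢ Y))
    (hftconv : ∀ x ∈ X, ConvexOn ℝ Y fun z => ft (x, z))
    (hgtconv : ∀ x ∈ X, ∀ i, ConvexOn ℝ Y fun z => gt (x, z) i)
    (hfeas : ∀ x ∈ X, ∃ z ∈ Y, ∀ i, gt (x, z) i ≤ 0)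
    -- `f̃*_hi` is finite
    (hbdd : BddAbove {v | ∃ x ∈ X, v = ftStar ft gt Y x})
    (μ : ℝ) (hμ : 0 < μ)
    (x : En n) (hx : x ∈ X)
    (zstar : En m) (hzstar : zstar ∈ Y)
    (hmin : Ptilde ft gt μ x zstar = PtildeMinVal ft gt Y μ x) :
    ‖posPart (gt (x, zstar))‖ ^ 2 ≤ μ⁻¹ * (ftStarHi ft gt X Y - ftLow ft X Y) :=
  stmt9_general X Y hXcpt hYcpt ft gt hftc hfeas hbdd μ hμ x hx zstar hzstar hmin
end
end

section
/- Assume f and f̃ are Lipschitz on X × Y, g̃ is Lipschitz on X × Y, the Slater condition holds with constant G > 0, the error-bound assumption holds with constants θ̄ > 0 and function ω, and for each k the penalized bilevel problem with parameter μ_k attains its optimal value f*_{μ_k}. Let (ρ_k), (μ_k), (ε_k) be sequences of positive reals with ρ_k → ∞, μ_k → ∞, ε_k → 0, and for each k let (x^k, y^k, z^k) ∈ X × Y × Y be an ε_k-optimal solution of the minimax problem min_{(x,y)∈X×Y} max_{z∈Y} P_{ρ_k,μ_k}(x,y,z). If (x^k, y^k) converges to (x̄, ȳ), then g̃(x̄,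 ȳ) ≤ 0 componentwise, f̃(x̄, ȳ) = f̃*(x̄), and f(x̄, ȳ) = f*; that is, every accumulation point of (x^k, y^k) is an optimal solution of the constrained bilevel problem. -/
noncomputable section

open Set

open scoped RealInnerProductSpace

/-!
The penalty gap `r_k = P̃_{μ_k}(x_k,y_k) − min_z P̃_{μ_k}(x_k,z)` is nonnegative, and ε-optimality
together with the attainment of `f*_{μ_k}` gives `f(x_k,y_k) + ρ_k r_k ≤ f*_{μ_k} + 2ε_k`; as
`ρ_k → ∞` this forces `r_k → 0`. Then `μ_k ‖[g̃(x_k,y_k)]₊‖²` stays bounded, so the constraint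
violation vanishes and `(x̄,ȳ)` is feasible. Moving towards a Slater point shows
`f̃*(x) ≤ f̃(x,z) + C ‖[g̃(x,z)]₊‖` with `C = L_f̃ · diam Y / G`, which in the limit makes `ȳ` a
lower-level solution. Finally, the minimizers of `P̃_μ(x,·)` violate the constraints by at most
`C / μ`, so the error bound gives `f*_μ ≤ f(x,y) + L_f ω((C+1)/μ)` for every bilevel-feasible
`(x,y)`; letting `k → ∞` in `f(x_k,y_k) ≤ f*_{μ_k} + 2ε_k` yields `f(x̄,ȳ) ≤ f*`.
-/

namespace BilevelPenalty

open Filter Topology Metric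

variable {n m l : ℕ}

section PosPart

theorem norm_posPart_eq_zero_iff {v : En l} : ‖posPart v‖ = 0 ↔ ∀ i, v i ≤ 0 := by
  rw [norm_eq_zero]
  refine ⟨fun h i => ?_, fun h => ?_⟩
  · exact max_eq_right_iff.1 (congrArg (· i) h)
  · ext i
    exact max_eq_right (h i)

theorem norm_posPart_le_zero_iff {v : En l} : ‖posPart v‖ ≤ 0 ↔ ∀ i, v i ≤ 0 := by
  rw [← norm_posPart_eq_zero_iff, le_antisymm_iff, and_iff_left (norm_nonneg _)]

theorem le_norm_posPart (v : En l) (i : Fin l) : v i ≤ ‖posPart v‖ :=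
  calc v i ≤ max (v i) 0 := le_max_left _ _
    _ ≤ ‖posPart v i‖ := le_abs_self _
    _ ≤ ‖posPart v‖ := PiLp.norm_apply_le _ i

theorem continuous_norm_posPart : Continuous fun v : En l => ‖posPart v‖ := by
  unfold _root_.posPart
  fun_prop

end PosPart

theorem prodDist_mk_left (x : En n) (y z : En m) : prodDist (x, y) (x, z) = ‖y - z‖ := by
  simp [prodDist, Real.sqrt_sq (norm_nonneg _)]

theorem _root_.LipOnXY.abs_sub_le {φ : En n × En m → ℝ} {L : ℝ} {X : Set (En n)} {Y : Set (En m)}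
    (h : LipOnXY φ L X Y) {x : En n} {y z : En m} (hx : x ∈ X) (hy : y ∈ Y) (hz : z ∈ Y) :
    |φ (x, y) - φ (x, z)| ≤ L * ‖y - z‖ := by
  simpa only [prodDist_mk_left] using h (x, y) ⟨hx, hy⟩ (x, z) ⟨hx, hz⟩

theorem _root_.ContinuousOn.tendsto_comp_of_mem {α β ι : Type*} [TopologicalSpace α]
    [TopologicalSpace β] {φ : α → β} {s : Set α} {l : Filter ι} {u : ι → α} {a : α}
    (hφ : ContinuousOn φ s) (ha : a ∈ s) (hu : Tendsto u l (𝓝 a)) (hus : ∀ k, u k ∈ s) :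
    Tendsto (fun k => φ (u k)) l (𝓝 (φ a)) :=
  (hφ a ha).tendsto.comp (tendsto_nhdsWithin_iff.2 ⟨hu, .of_forall hus⟩)

theorem tendsto_zero_of_mul_le {ι : Type*} {l : Filter ι} {u a b : ι → ℝ} {c : ℝ}
    (hu : ∀ k, 0 ≤ u k) (ha : Tendsto a l atTop) (hb : Tendsto b l (𝓝 c))
    (h : ∀ k, a k * u k ≤ b k) : Tendsto u l (𝓝 0) := by
  refine squeeze_zero' (.of_forall hu) ?_ (hb.div_atTop ha)
  filter_upwards [ha.eventually_gt_atTop 0] with k hk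
  rw [le_div_iff₀ hk, mul_comm]
  exact h k

section Penalty

variable {X : Set (En n)} {Y : Set (En m)} {f ft : En n × En m → ℝ} {gt : En n × En m → En l}
  {ρ μ : ℝ} {x : En n} {y y₀ z w : En m}

def penaltyGap (ft : En n × En m → ℝ) (gt : En n × En m → En l) (Y : Set (En m)) (μ : ℝ)
    (x : En n) (y : En m) : ℝ :=
  Ptilde ft gt μ x y - PtildeMinVal ft gt Y μ x

theorem Ptilde_of_feasible (hz : ∀ i, gt (x, z) i ≤ 0) : Ptilde ft gt μ x z = ft (x, z) := by
  simp [Ptilde, norm_posPart_eq_zero_iff.2 hz]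

theorem PtildeMinVal_eq_of_isMinOn (hy₀ : y₀ ∈ Y) (hmin : IsMinOn (Ptilde ft gt μ x) Y y₀) :
    PtildeMinVal ft gt Y μ x = Ptilde ft gt μ x y₀ :=
  IsLeast.csInf_eq ⟨⟨y₀, hy₀, rfl⟩, by rintro _ ⟨z, hz, rfl⟩; exact hmin hz⟩

theorem maxPc_eq_of_isMinOn (hρ : 0 ≤ ρ) (hy₀ : y₀ ∈ Y)
    (hmin : IsMinOn (Ptilde ft gt μ x) Y y₀) :
    maxPc f ft gt Y ρ μ x y = f (x, y) + ρ * (Ptilde ft gt μ x y - Ptilde ft gt μ x y₀) := by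
  refine IsGreatest.csSup_eq ⟨⟨y₀, hy₀, rfl⟩, ?_⟩
  rintro _ ⟨z, hz, rfl⟩
  unfold Prhomu
  gcongr
  exact hmin hz

theorem mem_Sθ_of_isMinOn (hμ : 0 ≤ μ) (hy₀ : y₀ ∈ Y) (hmin : IsMinOn (Ptilde ft gt μ x) Y y₀) :
    y₀ ∈ Sθ ft gt Y ‖posPart (gt (x, y₀))‖ x := by
  refine ⟨hy₀, le_rfl, (IsLeast.csInf_eq ⟨?_, ?_⟩).symm⟩
  · exact ⟨y₀, hy₀, le_rfl, rfl⟩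
  rintro _ ⟨z, hz, hθz, rfl⟩
  have hP : Ptilde ft gt μ x y₀ ≤ Ptilde ft gt μ x z := hmin hz
  have hθ : μ * ‖posPart (gt (x, z))‖ ^ 2 ≤ μ * ‖posPart (gt (x, y₀))‖ ^ 2 := by gcongr
  unfold Ptilde at hP
  linarith

theorem isMinOn_of_mem_Sθ (hμ : 0 ≤ μ) (hy₀ : y₀ ∈ Y) (hmin : IsMinOn (Ptilde ft gt μ x) Y y₀)
    (hw : w ∈ Sθ ft gt Y ‖posPart (gt (x, y₀))‖ x) : IsMinOn (Ptilde ft gt μ x) Y w := by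
  obtain ⟨-, hθw, hftw⟩ := hw
  have hft : ft (x, w) = ft (x, y₀) := hftw.trans (mem_Sθ_of_isMinOn hμ hy₀ hmin).2.2.symm
  have hle : Ptilde ft gt μ x w ≤ Ptilde ft gt μ x y₀ := by
    unfold Ptilde
    rw [hft]
    gcongr
  exact isMinOn_iff.2 fun z hz => hle.trans (hmin hz)

theorem mem_Sθ_zero_iff :
    y ∈ Sθ ft gt Y 0 x ↔ y ∈ Y ∧ (∀ i, gt (x, y) i ≤ 0) ∧ ft (x, y) = ftStar ft gt Y x := by
  simp only [Sθ, ftStar, norm_posPart_le_zero_iff, mem_ofPred_eq]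

theorem fStarMu_le (hf : BddBelow (f '' (X ×ˢ Y))) (hx : x ∈ X) (hy : y ∈ Y)
    (hP : Ptilde ft gt μ x y = PtildeMinVal ft gt Y μ x) : fStarMu f ft gt X Y μ ≤ f (x, y) := by
  refine csInf_le (hf.mono ?_) ⟨x, hx, y, hy, hP, rfl⟩
  rintro _ ⟨x', hx', y', hy', -, rfl⟩
  exact ⟨(x', y'), ⟨hx', hy'⟩, rfl⟩

end Penalty

structure LowerLevelAssumptions (X : Set (En n)) (Y : Set (En m)) (ft : En n × En m → ℝ)
    (gt : En n × En m → En l) (L G : ℝ) : Prop where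
  isCompact : IsCompact Y
  convex : Convex ℝ Y
  continuousOn_ft : ContinuousOn ft (X ×ˢ Y)
  continuousOn_gt : ContinuousOn gt (X ×ˢ Y)
  convexOn_gt : ∀ x ∈ X, ∀ i, ConvexOn ℝ Y fun z => gt (x, z) i
  lipOnXY_ft : LipOnXY ft L X Y
  nonneg : 0 ≤ L
  slater : Slater gt X Y G
  pos : 0 < G

namespace LowerLevelAssumptions

variable {X : Set (En n)} {Y : Set (En m)} {f ft : En n × En m → ℝ} {gt : En n × En m → En l}
  {L G ρ μ ε : ℝ} {x : En n} {y y₀ z : En m}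

theorem exists_feasible (h : LowerLevelAssumptions X Y ft gt L G) (hx : x ∈ X) :
    ∃ z ∈ Y, ∀ i, gt (x, z) i ≤ 0 := by
  obtain ⟨z, hz, hslater⟩ := h.slater x hx
  exact ⟨z, hz, fun i => (hslater i).trans (neg_nonpos.2 h.pos.le)⟩

theorem ftStar_le (h : LowerLevelAssumptions X Y ft gt L G) (hx : x ∈ X) (hz : z ∈ Y)
    (hfz : ∀ i, gt (x, z) i ≤ 0) : ftStar ft gt Y x ≤ ft (x, z) := by
  refine csInf_le ((h.isCompact.bddBelow_image
    (h.continuousOn_ft.uncurry_left (f := fun x z => ft (x, z)) x hx)).mono ?_) ⟨z, hz, hfz, rfl⟩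
  rintro _ ⟨z, hz, -, rfl⟩
  exact ⟨z, hz, rfl⟩

theorem exists_isMinOn_Ptilde (h : LowerLevelAssumptions X Y ft gt L G) (hx : x ∈ X) (μ : ℝ) :
    ∃ y₀ ∈ Y, IsMinOn (Ptilde ft gt μ x) Y y₀ := by
  obtain ⟨z, hz, -⟩ := h.slater x hx
  refine h.isCompact.exists_isMinOn ⟨z, hz⟩ ?_
  have hgt := h.continuousOn_gt.uncurry_left (f := fun x z => gt (x, z)) x hx
  exact (h.continuousOn_ft.uncurry_left (f := fun x z => ft (x, z)) x hx).add
    (continuousOn_const.mul ((continuous_norm_posPart.comp_continuousOn hgt).pow 2))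

theorem PtildeMinVal_le (h : LowerLevelAssumptions X Y ft gt L G) (hx : x ∈ X) (hz : z ∈ Y) :
    PtildeMinVal ft gt Y μ x ≤ Ptilde ft gt μ x z := by
  obtain ⟨y₀, hy₀, hmin⟩ := h.exists_isMinOn_Ptilde hx μ
  rw [PtildeMinVal_eq_of_isMinOn hy₀ hmin]
  exact hmin hz

theorem penaltyGap_nonneg (h : LowerLevelAssumptions X Y ft gt L G) (hx : x ∈ X) (hy : y ∈ Y) :
    0 ≤ penaltyGap ft gt Y μ x y :=
  sub_nonneg.2 (h.PtildeMinVal_le hx hy)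

theorem PtildeMinVal_le_ftStar (h : LowerLevelAssumptions X Y ft gt L G) (hx : x ∈ X) :
    PtildeMinVal ft gt Y μ x ≤ ftStar ft gt Y x := by
  obtain ⟨z, hz, hfz⟩ := h.exists_feasible hx
  refine le_csInf ⟨_, z, hz, hfz, rfl⟩ ?_
  rintro _ ⟨z, hz, hfz, rfl⟩
  rw [← Ptilde_of_feasible (ft := ft) (μ := μ) hfz]
  exact h.PtildeMinVal_le hx hz

/-- Moving from `z` towards a Slater point by the fraction `t = θ / (θ + G)`, where
`θ = ‖[g̃(x,z)]₊‖`, reaches a feasible point within distance `θ / G · diam Y` of `z`. -/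
theorem ftStar_le_add_mul_norm_posPart (h : LowerLevelAssumptions X Y ft gt L G) (hx : x ∈ X)
    (hz : z ∈ Y) :
    ftStar ft gt Y x ≤ ft (x, z) + L * diam Y / G * ‖posPart (gt (x, z))‖ := by
  obtain ⟨zh, hzh, hslater⟩ := h.slater x hx
  set θ := ‖posPart (gt (x, z))‖
  have hθ : 0 ≤ θ := norm_nonneg _
  have hθG : 0 < θ + G := by linarith [h.pos]
  set t := θ / (θ + G)
  have ht₀ : 0 ≤ t := by positivity
  have ht₁ : t ≤ 1 := div_le_one_of_le₀ (by linarith [h.pos]) hθG.le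
  set zt := (1 - t) • z + t • zh
  have hzt : zt ∈ Y := h.convex hz hzh (by linarith) ht₀ (by ring)
  have hfeas (i : Fin l) : gt (x, zt) i ≤ 0 :=
    calc gt (x, zt) i ≤ (1 - t) * gt (x, z) i + t * gt (x, zh) i :=
          (h.convexOn_gt x hx i).2 hz hzh (by linarith) ht₀ (by ring)
      _ ≤ (1 - t) * θ + t * -G :=
          add_le_add (mul_le_mul_of_nonneg_left (le_norm_posPart _ i) (by linarith))
            (mul_le_mul_of_nonneg_left (hslater i) ht₀)
      _ = 0 := by
          simp only [t]
          field_simp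
          ring
  have hdist : ‖zt - z‖ ≤ θ / G * diam Y :=
    calc ‖zt - z‖ = t * ‖zh - z‖ := by
          rw [show zt - z = t • (zh - z) by simp only [zt]; module, norm_smul,
            Real.norm_of_nonneg ht₀]
      _ ≤ θ / G * diam Y := by
          refine mul_le_mul (div_le_div_of_nonneg_left hθ h.pos (by linarith)) ?_ (norm_nonneg _)
            (div_nonneg hθ h.pos.le)
          rw [← dist_eq_norm]
          exact dist_le_diam_of_mem h.isCompact.isBounded hzh hz
  calc ftStar ft gt Y x ≤ ft (x, zt) := h.ftStar_le hx hzt hfeas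
    _ ≤ ft (x, z) + L * ‖zt - z‖ := by
        linarith [(abs_le.1 (h.lipOnXY_ft.abs_sub_le hx hzt hz)).2]
    _ ≤ ft (x, z) + L * (θ / G * diam Y) := by
        gcongr
        exact h.nonneg
    _ = ft (x, z) + L * diam Y / G * θ := by ring

theorem norm_posPart_le_of_isMinOn (h : LowerLevelAssumptions X Y ft gt L G) (hx : x ∈ X)
    (hμ : 0 < μ) (hy₀ : y₀ ∈ Y) (hmin : IsMinOn (Ptilde ft gt μ x) Y y₀) :
    ‖posPart (gt (x, y₀))‖ ≤ L * diam Y / G / μ := by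
  set θ := ‖posPart (gt (x, y₀))‖
  have hθ : 0 ≤ θ := norm_nonneg _
  have hP := h.PtildeMinVal_le_ftStar hx (μ := μ)
  rw [PtildeMinVal_eq_of_isMinOn hy₀ hmin] at hP
  have hA := h.ftStar_le_add_mul_norm_posPart hx hy₀
  have key : θ * (μ * θ) ≤ θ * (L * diam Y / G) := by
    unfold Ptilde at hP
    linarith
  rw [le_div_iff₀ hμ, mul_comm]
  rcases hθ.eq_or_lt with hθ₀ | hθ₀
  · rw [← hθ₀, mul_zero]
    exact div_nonneg (mul_nonneg h.nonneg diam_nonneg) h.pos.le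
  · exact le_of_mul_le_mul_left key hθ₀

theorem maxPc_eq (h : LowerLevelAssumptions X Y ft gt L G) (hx : x ∈ X) (hρ : 0 ≤ ρ) :
    maxPc f ft gt Y ρ μ x y = f (x, y) + ρ * penaltyGap ft gt Y μ x y := by
  obtain ⟨y₀, hy₀, hmin⟩ := h.exists_isMinOn_Ptilde hx μ
  rw [maxPc_eq_of_isMinOn hρ hy₀ hmin, penaltyGap, PtildeMinVal_eq_of_isMinOn hy₀ hmin]

theorem minimaxValc_le_fStarMu (h : LowerLevelAssumptions X Y ft gt L G)
    (hf : BddBelow (f '' (X ×ˢ Y))) (hρ : 0 ≤ ρ)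
    (hattain : ∃ x ∈ X, ∃ y ∈ Y, Ptilde ft gt μ x y = PtildeMinVal ft gt Y μ x ∧
      f (x, y) = fStarMu f ft gt X Y μ) :
    minimaxValc f ft gt X Y ρ μ ≤ fStarMu f ft gt X Y μ := by
  obtain ⟨x, hx, y, hy, hP, hval⟩ := hattain
  obtain ⟨B, hB⟩ := hf
  have hbdd : BddBelow {v | ∃ x ∈ X, ∃ y ∈ Y, v = maxPc f ft gt Y ρ μ x y} := by
    refine ⟨B, ?_⟩
    rintro _ ⟨x', hx', y', hy', rfl⟩
    rw [h.maxPc_eq hx' hρ]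
    exact (hB ⟨_, ⟨hx', hy'⟩, rfl⟩).trans
      (le_add_of_nonneg_right (mul_nonneg hρ (h.penaltyGap_nonneg hx' hy')))
  have hmax : maxPc f ft gt Y ρ μ x y = f (x, y) := by
    rw [h.maxPc_eq hx hρ, penaltyGap, hP, sub_self, mul_zero, add_zero]
  exact (csInf_le hbdd ⟨x, hx, y, hy, hmax.symm⟩).trans_eq hval

theorem add_mul_penaltyGap_le (h : LowerLevelAssumptions X Y ft gt L G)
    (hf : BddBelow (f '' (X ×ˢ Y))) (hρ : 0 ≤ ρ) (hx : x ∈ X)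
    (hopt : epsOptimalc f ft gt X Y ρ μ ε x y z)
    (hattain : ∃ x ∈ X, ∃ y ∈ Y, Ptilde ft gt μ x y = PtildeMinVal ft gt Y μ x ∧
      f (x, y) = fStarMu f ft gt X Y μ) :
    f (x, y) + ρ * penaltyGap ft gt Y μ x y ≤ fStarMu f ft gt X Y μ + 2 * ε := by
  have := h.minimaxValc_le_fStarMu hf hρ hattain
  rw [← h.maxPc_eq hx hρ]
  linarith [hopt.1, hopt.2]

/-- For a minimizer `y₀` of `P̃_μ(x,·)` and `s = ‖[g̃(x,y₀)]₊‖ ≤ L · diam Y / (G μ)`, every point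
of `S_s(x)` is again a minimizer; the error bound finds one within `ω θ` of `y`. -/
theorem fStarMu_le_of_mem_Sθ_zero (h : LowerLevelAssumptions X Y ft gt L G)
    {Lf θ θbar : ℝ} {ω : ℝ → ℝ} (hf : BddBelow (f '' (X ×ˢ Y))) (hLipf : LipOnXY f Lf X Y)
    (hLf : 0 ≤ Lf) (herr : ErrorBound ft gt X Y θbar ω) (hx : x ∈ X) (hy : y ∈ Sθ ft gt Y 0 x)
    (hμ : 0 < μ) (hθ : L * diam Y / G / μ ≤ θ) (hθbar : θ ≤ θbar) :
    fStarMu f ft gt X Y μ ≤ f (x, y) + Lf * ω θ := by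
  obtain ⟨-, -, hωmono, -, herr⟩ := herr
  obtain ⟨y₀, hy₀, hmin⟩ := h.exists_isMinOn_Ptilde hx μ
  set S := Sθ ft gt Y ‖posPart (gt (x, y₀))‖ x
  have hθ₀ : ‖posPart (gt (x, y₀))‖ ≤ θ := (h.norm_posPart_le_of_isMinOn hx hμ hy₀ hmin).trans hθ
  have hdist : infDist y S ≤ ω θ :=
    (herr x hx y hy _ ⟨norm_nonneg _, hθ₀.trans hθbar⟩).trans (hωmono _ _ (norm_nonneg _) hθ₀)
  have hS (w : S) : fStarMu f ft gt X Y μ - f (x, y) ≤ Lf * dist y w := by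
    have hwY : (w : En m) ∈ Y := w.2.1
    have hw := fStarMu_le hf hx hwY
      (PtildeMinVal_eq_of_isMinOn hwY (isMinOn_of_mem_Sθ hμ.le hy₀ hmin w.2)).symm
    have hLip := (abs_le.1 (hLipf.abs_sub_le hx hwY hy.1)).2
    rw [dist_comm, dist_eq_norm]
    linarith
  have : Nonempty S := ⟨⟨y₀, mem_Sθ_of_isMinOn hμ.le hy₀ hmin⟩⟩
  have hinf : fStarMu f ft gt X Y μ - f (x, y) ≤ Lf * infDist y S := by
    rw [infDist_eq_iInf, Real.mul_iInf_of_nonneg hLf]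
    exact le_ciInf hS
  linarith [mul_le_mul_of_nonneg_left hdist hLf]

section Limits

variable {xs : ℕ → En n} {ys : ℕ → En m} {ρs μs εs : ℕ → ℝ} {xbar : En n} {ybar : En m}

theorem tendsto_penaltyGap (h : LowerLevelAssumptions X Y ft gt L G) {B : ℝ}
    (hf : ∀ p ∈ X ×ˢ Y, |f p| ≤ B) (hxs : ∀ k, xs k ∈ X) (hys : ∀ k, ys k ∈ Y)
    (hρ : Tendsto ρs atTop atTop) (hε : Tendsto εs atTop (𝓝 0))
    (hattain : ∀ k, ∃ x ∈ X, ∃ y ∈ Y,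
      Ptilde ft gt (μs k) x y = PtildeMinVal ft gt Y (μs k) x ∧
      f (x, y) = fStarMu f ft gt X Y (μs k))
    (hgap : ∀ k, f (xs k, ys k) + ρs k * penaltyGap ft gt Y (μs k) (xs k) (ys k) ≤
      fStarMu f ft gt X Y (μs k) + 2 * εs k) :
    Tendsto (fun k => penaltyGap ft gt Y (μs k) (xs k) (ys k)) atTop (𝓝 0) := by
  refine tendsto_zero_of_mul_le (fun k => h.penaltyGap_nonneg (hxs k) (hys k)) hρ
    ((hε.const_mul 2).const_add (2 * B)) fun k => ?_
  obtain ⟨x, hx, y, hy, -, hval⟩ := hattain k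
  have hlow := (abs_le.1 (hf _ (mk_mem_prod (hxs k) (hys k)))).1
  have hup := (abs_le.1 (hf _ (mk_mem_prod hx hy))).2
  linarith [hgap k]

theorem tendsto_norm_posPart (h : LowerLevelAssumptions X Y ft gt L G) {B : ℝ}
    (hft : ∀ p ∈ X ×ˢ Y, |ft p| ≤ B) (hxs : ∀ k, xs k ∈ X) (hys : ∀ k, ys k ∈ Y)
    (hμ : Tendsto μs atTop atTop)
    (hgap : Tendsto (fun k => penaltyGap ft gt Y (μs k) (xs k) (ys k)) atTop (𝓝 0)) :
    Tendsto (fun k => ‖posPart (gt (xs k, ys k))‖) atTop (𝓝 0) := by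
  have hsq : Tendsto (fun k => ‖posPart (gt (xs k, ys k))‖ ^ 2) atTop (𝓝 0) := by
    refine tendsto_zero_of_mul_le (fun k => by positivity) hμ (hgap.const_add (2 * B)) fun k => ?_
    obtain ⟨z, hz, hfz⟩ := h.exists_feasible (hxs k)
    have h₁ := h.PtildeMinVal_le_ftStar (hxs k) (μ := μs k)
    have h₂ := h.ftStar_le (hxs k) hz hfz
    have h₃ := (abs_le.1 (hft _ (mk_mem_prod (hxs k) (hys k)))).1
    have h₄ := (abs_le.1 (hft _ (mk_mem_prod (hxs k) hz))).2
    rw [penaltyGap, Ptilde]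
    linarith
  simpa [Real.sqrt_sq (norm_nonneg _)] using hsq.sqrt

theorem feasible_of_tendsto (h : LowerLevelAssumptions X Y ft gt L G) (hxs : ∀ k, xs k ∈ X)
    (hys : ∀ k, ys k ∈ Y) (hbar : (xbar, ybar) ∈ X ×ˢ Y)
    (hlim : Tendsto (fun k => (xs k, ys k)) atTop (𝓝 (xbar, ybar)))
    (hθ : Tendsto (fun k => ‖posPart (gt (xs k, ys k))‖) atTop (𝓝 0)) :
    ∀ i, gt (xbar, ybar) i ≤ 0 :=
  norm_posPart_eq_zero_iff.1 <| tendsto_nhds_unique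
    ((continuous_norm_posPart.comp_continuousOn h.continuousOn_gt).tendsto_comp_of_mem hbar hlim
      fun k => mk_mem_prod (hxs k) (hys k)) hθ

theorem ft_le_of_tendsto (h : LowerLevelAssumptions X Y ft gt L G) (hμ : ∀ k, 0 ≤ μs k)
    (hxs : ∀ k, xs k ∈ X) (hys : ∀ k, ys k ∈ Y) (hbar : (xbar, ybar) ∈ X ×ˢ Y)
    (hlim : Tendsto (fun k => (xs k, ys k)) atTop (𝓝 (xbar, ybar)))
    (hgap : Tendsto (fun k => penaltyGap ft gt Y (μs k) (xs k) (ys k)) atTop (𝓝 0))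
    (hz : z ∈ Y) (hfz : ∀ i, gt (xbar, z) i ≤ 0) : ft (xbar, ybar) ≤ ft (xbar, z) := by
  set C := L * diam Y / G
  have hbound (k : ℕ) : ft (xs k, ys k) ≤
      ft (xs k, z) + C * ‖posPart (gt (xs k, z))‖ + penaltyGap ft gt Y (μs k) (xs k) (ys k) := by
    have h₁ := h.PtildeMinVal_le_ftStar (hxs k) (μ := μs k)
    have h₂ := h.ftStar_le_add_mul_norm_posPart (hxs k) hz
    have h₃ : 0 ≤ μs k * ‖posPart (gt (xs k, ys k))‖ ^ 2 := mul_nonneg (hμ k) (sq_nonneg _)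
    rw [penaltyGap, Ptilde]
    linarith
  have hxz : Tendsto (fun k => (xs k, z)) atTop (𝓝 (xbar, z)) :=
    hlim.fst_nhds.prodMk_nhds tendsto_const_nhds
  have hmemz (k : ℕ) : (xs k, z) ∈ X ×ˢ Y := mk_mem_prod (hxs k) hz
  have hbarz : (xbar, z) ∈ X ×ˢ Y := mk_mem_prod hbar.1 hz
  have hlimz := ((h.continuousOn_ft.tendsto_comp_of_mem hbarz hxz hmemz).add
    (((continuous_norm_posPart.comp_continuousOn h.continuousOn_gt).tendsto_comp_of_mem
      hbarz hxz hmemz).const_mul C)).add hgap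
  have hlimy := h.continuousOn_ft.tendsto_comp_of_mem hbar hlim fun k => mk_mem_prod (hxs k) (hys k)
  simpa [norm_posPart_eq_zero_iff.2 hfz] using le_of_tendsto_of_tendsto' hlimy hlimz hbound

theorem f_le_of_tendsto (h : LowerLevelAssumptions X Y ft gt L G) {Lf θbar : ℝ} {ω : ℝ → ℝ}
    (hfc : ContinuousOn f (X ×ˢ Y)) (hf : BddBelow (f '' (X ×ˢ Y))) (hLipf : LipOnXY f Lf X Y)
    (hLf : 0 ≤ Lf) (herr : ErrorBound ft gt X Y θbar ω) (hμpos : ∀ k, 0 < μs k)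
    (hμ : Tendsto μs atTop atTop) (hε : Tendsto εs atTop (𝓝 0)) (hxs : ∀ k, xs k ∈ X)
    (hys : ∀ k, ys k ∈ Y) (hbar : (xbar, ybar) ∈ X ×ˢ Y)
    (hlim : Tendsto (fun k => (xs k, ys k)) atTop (𝓝 (xbar, ybar)))
    (hle : ∀ k, f (xs k, ys k) ≤ fStarMu f ft gt X Y (μs k) + 2 * εs k) {x : En n} {y : En m}
    (hx : x ∈ X) (hy : y ∈ Sθ ft gt Y 0 x) : f (xbar, ybar) ≤ f (x, y) := by
  have ⟨hθbar, _, _, hω, _⟩ := herr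
  set C := L * diam Y / G
  have hC : 0 ≤ C := div_nonneg (mul_nonneg h.nonneg diam_nonneg) h.pos.le
  -- `C + 1` rather than `C`: `ω` is only known to vanish along `0⁺`
  have hθ : Tendsto (fun k => (C + 1) / μs k) atTop (𝓝[>] 0) :=
    tendsto_nhdsWithin_iff.2 ⟨tendsto_const_nhds.div_atTop hμ,
      .of_forall fun k => div_pos (by linarith) (hμpos k)⟩
  have hbound : ∀ᶠ k in atTop,
      f (xs k, ys k) ≤ f (x, y) + Lf * ω ((C + 1) / μs k) + 2 * εs k := by
    filter_upwards [(tendsto_nhdsWithin_iff.1 hθ).1.eventually (eventually_le_nhds hθbar)]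
      with k hk
    have := h.fStarMu_le_of_mem_Sθ_zero hf hLipf hLf herr hx hy (hμpos k)
      (div_le_div_of_nonneg_right (by linarith) (hμpos k).le) hk
    linarith [hle k]
  have hlimy := hfc.tendsto_comp_of_mem hbar hlim fun k => mk_mem_prod (hxs k) (hys k)
  have hlimR : Tendsto (fun k => f (x, y) + Lf * ω ((C + 1) / μs k) + 2 * εs k) atTop
      (𝓝 (f (x, y) + Lf * 0 + 2 * 0)) :=
    (((hω.comp hθ).const_mul Lf).const_add _).add (hε.const_mul 2)
  simpa using le_of_tendsto_of_tendsto hlimy hlimR hbound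

end Limits

end LowerLevelAssumptions

end BilevelPenalty

open BilevelPenalty

open Filter in
theorem stmt12_general {n m l : ℕ}
    (X : Set (En n)) (Y : Set (En m))
    (hXcpt : IsCompact X)
    (hYcpt : IsCompact Y) (hYconv : Convex ℝ Y)
    (f ft : En n × En m → ℝ) (gt : En n × En m → En l)
    (hfc : ContinuousOn f (X ×ˢ Y)) (hftc : ContinuousOn ft (X ×ˢ Y))
    (hgtc : ContinuousOn gt (X ×ˢ Y))
    (hgtconv : ∀ x ∈ X, ∀ i, ConvexOn ℝ Y fun z => gt (x, z) i)
    (Lf Lft G : ℝ) (hLf : 0 ≤ Lf) (hLft : 0 ≤ Lft) (hG : 0 < G)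
    (hLipf : LipOnXY f Lf X Y) (hLipft : LipOnXY ft Lft X Y)
    (hslater : Slater gt X Y G)
    (θbar : ℝ) (ω : ℝ → ℝ) (herr : ErrorBound ft gt X Y θbar ω)
    (ρseq μseq εseq : ℕ → ℝ)
    (hρpos : ∀ k, 0 < ρseq k) (hμpos : ∀ k, 0 < μseq k)
    (hρtend : Tendsto ρseq atTop atTop) (hμtend : Tendsto μseq atTop atTop)
    (hεtend : Tendsto εseq atTop (nhds 0))
    -- for each k the penalized bilevel problem with parameter μ_k attains its optimal value
    (hattain : ∀ k, ∃ x ∈ X, ∃ y ∈ Y,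
      Ptilde ft gt (μseq k) x y = PtildeMinVal ft gt Y (μseq k) x ∧
      f (x, y) = fStarMu f ft gt X Y (μseq k))
    (xseq : ℕ → En n) (yseq zseq : ℕ → En m)
    (hxseq : ∀ k, xseq k ∈ X) (hyseq : ∀ k, yseq k ∈ Y)
    (hoptseq : ∀ k,
      epsOptimalc f ft gt X Y (ρseq k) (μseq k) (εseq k) (xseq k) (yseq k) (zseq k))
    (xbar : En n) (ybar : En m)
    (hconv : Tendsto (fun k => (xseq k, yseq k)) atTop (nhds (xbar, ybar))) :
    (∀ i, gt (xbar, ybar) i ≤ 0) ∧ ft (xbar, ybar) = ftStar ft gt Y xbar ∧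
      f (xbar, ybar) = fStarC f ft gt X Y := by
  have hK := hXcpt.prod hYcpt
  have hLL : LowerLevelAssumptions X Y ft gt Lft G :=
    ⟨hYcpt, hYconv, hftc, hgtc, hgtconv, hLipft, hLft, hslater, hG⟩
  have hfb := hK.bddBelow_image hfc
  obtain ⟨Bf, hBf⟩ := hK.exists_bound_of_continuousOn hfc
  obtain ⟨Bft, hBft⟩ := hK.exists_bound_of_continuousOn hftc
  simp only [Real.norm_eq_abs] at hBf hBft
  have hbar : (xbar, ybar) ∈ X ×ˢ Y :=
    hK.isClosed.mem_of_tendsto hconv (.of_forall fun k => mk_mem_prod (hxseq k) (hyseq k))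
  have hgap (k : ℕ) :=
    hLL.add_mul_penaltyGap_le hfb (hρpos k).le (hxseq k) (hoptseq k) (hattain k)
  have hr := hLL.tendsto_penaltyGap hBf hxseq hyseq hρtend hεtend hattain hgap
  have hfeasbar := hLL.feasible_of_tendsto hxseq hyseq hbar hconv
    (hLL.tendsto_norm_posPart hBft hxseq hyseq hμtend hr)
  have hftbar : ft (xbar, ybar) = ftStar ft gt Y xbar := by
    refine (IsLeast.csInf_eq ⟨?_, ?_⟩).symm
    · exact ⟨ybar, hbar.2, hfeasbar, rfl⟩
    · rintro _ ⟨z, hz, hfz, rfl⟩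
      exact hLL.ft_le_of_tendsto (fun k => (hμpos k).le) hxseq hyseq hbar hconv hr hz hfz
  have hle (k : ℕ) : f (xseq k, yseq k) ≤ fStarMu f ft gt X Y (μseq k) + 2 * εseq k :=
    le_of_add_le_of_nonneg_left (hgap k)
      (mul_nonneg (hρpos k).le (hLL.penaltyGap_nonneg (hxseq k) (hyseq k)))
  refine ⟨hfeasbar, hftbar, (IsLeast.csInf_eq ⟨?_, ?_⟩).symm⟩
  · exact ⟨xbar, hbar.1, ybar, hbar.2, hfeasbar, hftbar, rfl⟩
  · rintro _ ⟨x, hx, y, hy, hfeas, hval, rfl⟩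
    exact hLL.f_le_of_tendsto hfc hfb hLipf hLf herr hμpos hμtend hεtend hxseq hyseq hbar hconv
      hle hx (mem_Sθ_zero_iff.2 ⟨hy, hfeas, hval⟩)

open Filter in
theorem stmt12 {n m l : ℕ} (hn : 0 < n) (hm : 0 < m) (hl : 0 < l)
    (X : Set (En n)) (Y : Set (En m))
    (hXne : X.Nonempty) (hXcpt : IsCompact X)
    (hYne : Y.Nonempty) (hYcpt : IsCompact Y) (hYconv : Convex ℝ Y)
    (f ft : En n × En m → ℝ) (gt : En n × En m → En l)
    (hfc : ContinuousOn f (X ×ˢ Y)) (hftc : ContinuousOn ft (X ×ˢ Y))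
    (hgtc : ContinuousOn gt (X ×ˢ Y))
    (hftconv : ∀ x ∈ X, ConvexOn ℝ Y fun z => ft (x, z))
    (hgtconv : ∀ x ∈ X, ∀ i, ConvexOn ℝ Y fun z => gt (x, z) i)
    (hfeas : ∀ x ∈ X, ∃ z ∈ Y, ∀ i, gt (x, z) i ≤ 0)
    (Lf Lft Lgt G : ℝ) (hLf : 0 ≤ Lf) (hLft : 0 ≤ Lft) (hLgt : 0 ≤ Lgt) (hG : 0 < G)
    (hLipf : LipOnXY f Lf X Y) (hLipft : LipOnXY ft Lft X Y)
    (hLipgt : ∀ p ∈ X ×ˢ Y, ∀ q ∈ X ×ˢ Y, ‖gt p - gt q‖ ≤ Lgt * prodDist p q)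
    (hslater : Slater gt X Y G)
    (θbar : ℝ) (ω : ℝ → ℝ) (herr : ErrorBound ft gt X Y θbar ω)
    (ρseq μseq εseq : ℕ → ℝ)
    (hρpos : ∀ k, 0 < ρseq k) (hμpos : ∀ k, 0 < μseq k) (hεpos : ∀ k, 0 < εseq k)
    (hρtend : Tendsto ρseq atTop atTop) (hμtend : Tendsto μseq atTop atTop)
    (hεtend : Tendsto εseq atTop (nhds 0))
    -- for each k the penalized bilevel problem with parameter μ_k attains its optimal value
    (hattain : ∀ k, ∃ x ∈ X, ∃ y ∈ Y,
      Ptilde ft gt (μseq k) x y = PtildeMinVal ft gt Y (μseq k) x ∧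
      f (x, y) = fStarMu f ft gt X Y (μseq k))
    (xseq : ℕ → En n) (yseq zseq : ℕ → En m)
    (hxseq : ∀ k, xseq k ∈ X) (hyseq : ∀ k, yseq k ∈ Y) (hzseq : ∀ k, zseq k ∈ Y)
    (hoptseq : ∀ k,
      epsOptimalc f ft gt X Y (ρseq k) (μseq k) (εseq k) (xseq k) (yseq k) (zseq k))
    (xbar : En n) (ybar : En m)
    (hconv : Tendsto (fun k => (xseq k, yseq k)) atTop (nhds (xbar, ybar))) :
    (∀ i, gt (xbar, ybar) i ≤ 0) ∧ ft (xbar, ybar) = ftStar ft gt Y xbar ∧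
      f (xbar, ybar) = fStarC f ft gt X Y :=
  stmt12_general X Y hXcpt hYcpt hYconv f ft gt hfc hftc hgtc hgtconv Lf Lft G hLf hLft hG hLipf
    hLipft hslater θbar ω herr ρseq μseq εseq hρpos hμpos hρtend hμtend hεtend hattain xseq yseq
    zseq hxseq hyseq hoptseq xbar ybar hconv
end
end

section
/- Let ρ, μ, ε, G > 0 and L_f̃ ≥ 0, and let x ∈ X and z ∈ Y. Assume: the map z' ↦ f̃(x,z') is convex on Y and satisfies |f̃(x,z') − f̃(x,z'')| ≤ L_f̃‖z' − z''‖ for all z', z'' ∈ Y; each map z' ↦ g̃_i(x,z') is convex on Y and differentiable at z with gradient ∇_z g̃_i(x,z); there exists ẑ ∈ Y with g̃_i(x,ẑ) ≤ −G for all i; and there exists s ∈ ℝᵐ that is a subgradient of f̃(x,·) at z on Y (i.e., f̃(x,z') ≥ f̃(x,z) + ⟨s, z' − z⟩ for all z' ∈ Y) such that ‖s + 2μ Σ_{i=1}^{l} [g̃_i(x,z)]₊ ∇_z g̃_i(x,z)‖ ≤ ρ⁻¹ε. Then ‖[g̃(x,z)]₊‖ ≤ Σ_{i=1}^{l} [g̃_i(x,z)]₊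 ≤ (2μG)⁻¹ D_Y ( ρ⁻¹ε + L_f̃ ). -/
/-!
Test the stationarity condition against the direction `ẑ - z` towards the Slater point. Convexity
of each `g̃ᵢ(x,·)` and the Slater bound `g̃ᵢ(x,ẑ) ≤ -G` make every active constraint decrease by at
least `G` along this direction, so the penalty part of the stationarity vector pairs with `ẑ - z`
to at most `-2μG Σᵢ [g̃ᵢ(x,z)]₊`. The subgradient part pairs to at most `L_f̃ ‖ẑ - z‖` by the
Lipschitz bound, and the whole vector has norm at most `ρ⁻¹ε`, which gives
`2μG Σᵢ [g̃ᵢ(x,z)]₊ ≤ (ρ⁻¹ε + L_f̃) ‖ẑ - z‖ ≤ (ρ⁻¹ε + L_f̃) D_Y`.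
-/

noncomputable section

open Set

open scoped RealInnerProductSpace

theorem PiLp.norm_le_sum_norm {p : ENNReal} [Fact (1 ≤ p)] {ι : Type*} [Fintype ι]
    {β : ι → Type*} [∀ i, SeminormedAddCommGroup (β i)] (x : PiLp p β) :
    ‖x‖ ≤ ∑ i, ‖x i‖ := by
  classical
  calc ‖x‖ = ‖∑ i, PiLp.single p i (x i)‖ := by congr 1; ext j; simp
    _ ≤ ∑ i, ‖PiLp.single p i (x i)‖ := norm_sum_le _ _
    _ = ∑ i, ‖x i‖ := by simp only [PiLp.norm_single]

section InnerProductSpace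

variable {E : Type*} [NormedAddCommGroup E] [InnerProductSpace ℝ E]

theorem ConvexOn.add_inner_le_of_hasGradientAt [CompleteSpace E] {s : Set E} {φ : E → ℝ}
    {g z y : E} (hφ : ConvexOn ℝ s φ) (hg : HasGradientAt φ g z) (hz : z ∈ s) (hy : y ∈ s) :
    φ z + ⟪g, y - z⟫ ≤ φ y := by
  let line : ℝ →ᵃ[ℝ] E := AffineMap.lineMap z y
  have hline : HasDerivAt (φ ∘ line) ⟪g, y - z⟫ 0 := by
    simpa using hg.hasFDerivAt.comp_hasDerivAt_of_eq 0 AffineMap.hasDerivAt_lineMap (by simp)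
  have hslope := (hφ.comp_affineMap line).le_slope_of_hasDerivAt
    (x := 0) (y := 1) (by simpa [line] using hz) (by simpa [line] using hy) zero_lt_one hline
  simp only [slope, sub_zero, inv_one, Function.comp_apply, AffineMap.lineMap_apply_one,
    AffineMap.lineMap_apply_zero, vsub_eq_sub, smul_eq_mul, one_mul, line] at hslope
  linarith

theorem inner_sum_max_zero_smul_le {ι : Type*} [Fintype ι] (c : ι → ℝ) (p : ι → E) (w : E)
    (G : ℝ) (h : ∀ i, c i + ⟪p i, w⟫ ≤ -G) :
    ⟪∑ i, max (c i) 0 • p i, w⟫ ≤ -(G * ∑ i, max (c i) 0) := by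
  have hterm : ∀ i, max (c i) 0 * ⟪p i, w⟫ ≤ -(G * max (c i) 0) := by
    intro i
    have hmax : 0 ≤ max (c i) 0 * c i := by
      rcases le_total (c i) 0 with hc | hc
      · simp [max_eq_right hc]
      · simp [max_eq_left hc, mul_self_nonneg]
    nlinarith [mul_le_mul_of_nonneg_left (h i) (le_max_right (c i) 0)]
  rw [sum_inner, Finset.mul_sum, ← Finset.sum_neg_distrib]
  exact Finset.sum_le_sum fun i _ => (real_inner_smul_left _ _ _).trans_le (hterm i)

theorem mul_le_mul_norm_of_norm_add_smul_le {s v w : E} {c L G A δ : ℝ} (hc : 0 ≤ c)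
    (hs : ⟪s, w⟫ ≤ L * ‖w‖) (hv : ⟪v, w⟫ ≤ -(G * A)) (hsv : ‖s + c • v‖ ≤ δ) :
    c * G * A ≤ (δ + L) * ‖w‖ := by
  have hlower : -(δ * ‖w‖) ≤ ⟪s + c • v, w⟫ :=
    calc -(δ * ‖w‖) ≤ -(‖s + c • v‖ * ‖w‖) := by gcongr
      _ ≤ ⟪s + c • v, w⟫ := neg_le_of_abs_le (abs_real_inner_le_norm _ _)
  rw [inner_add_left, real_inner_smul_left] at hlower
  nlinarith [mul_le_mul_of_nonneg_left hv hc]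

end InnerProductSpace

theorem stmt13_general {n m l : ℕ}
    (Y : Set (En m))
    (hYcpt : IsCompact Y)
    (ft : En n × En m → ℝ) (gt : En n × En m → En l)
    (ρ μ ε G Lft : ℝ) (hμ : 0 < μ) (hG : 0 < G) (hLft : 0 ≤ Lft)
    (x : En n) (z : En m) (hz : z ∈ Y)
    -- `f̃(x,·)` is convex and `L_f̃`-Lipschitz on Y
    (hftLip : ∀ z' ∈ Y, ∀ z'' ∈ Y, |ft (x, z') - ft (x, z'')| ≤ Lft * ‖z' - z''‖)
    -- each `g̃ᵢ(x,·)` is convex on Y and differentiable at z with gradient `∇_z g̃ᵢ(x,z)`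
    (hgtconv : ∀ i, ConvexOn ℝ Y fun z' => gt (x, z') i)
    (gradg : Fin l → En m)
    (hgrad : ∀ i, HasGradientAt (fun z' => gt (x, z') i) (gradg i) z)
    -- Slater point at x
    (zhat : En m) (hzhat : zhat ∈ Y) (hzhatG : ∀ i, gt (x, zhat) i ≤ -G)
    -- `s` is a subgradient of `f̃(x,·)` at z on Y
    (s : En m)
    (hsub : ∀ z' ∈ Y, ft (x, z) + ⟪s, z' - z⟫ ≤ ft (x, z'))
    (hnorm : ‖s + (2 * μ) • ∑ i, max (gt (x, z) i) 0 • gradg i‖ ≤ ρ⁻¹ * ε) :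
    ‖posPart (gt (x, z))‖ ≤ ∑ i, max (gt (x, z) i) 0 ∧
    ∑ i, max (gt (x, z) i) 0 ≤ (2 * μ * G)⁻¹ * Metric.diam Y * (ρ⁻¹ * ε + Lft) := by
  refine ⟨?_, ?_⟩
  · refine (PiLp.norm_le_sum_norm _).trans_eq (Finset.sum_congr rfl fun i _ => ?_)
    simp [_root_.posPart]
  have hslater : ⟪∑ i, max (gt (x, z) i) 0 • gradg i, zhat - z⟫
      ≤ -(G * ∑ i, max (gt (x, z) i) 0) :=
    inner_sum_max_zero_smul_le _ _ _ _ fun i =>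
      ((hgtconv i).add_inner_le_of_hasGradientAt (hgrad i) hz hzhat).trans (hzhatG i)
  have hobj : ⟪s, zhat - z⟫ ≤ Lft * ‖zhat - z‖ := by
    linarith [hsub zhat hzhat, (le_abs_self _).trans (hftLip zhat hzhat z hz)]
  have hdist : ‖zhat - z‖ ≤ Metric.diam Y := by
    simpa [dist_eq_norm] using Metric.dist_le_diam_of_mem hYcpt.isBounded hzhat hz
  have hcoef : 0 ≤ ρ⁻¹ * ε + Lft := add_nonneg ((norm_nonneg _).trans hnorm) hLft
  rw [mul_assoc, le_inv_mul_iff₀ (by positivity)]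
  calc 2 * μ * G * ∑ i, max (gt (x, z) i) 0 ≤ (ρ⁻¹ * ε + Lft) * ‖zhat - z‖ :=
        mul_le_mul_norm_of_norm_add_smul_le (by positivity) hobj hslater hnorm
    _ ≤ (ρ⁻¹ * ε + Lft) * Metric.diam Y := mul_le_mul_of_nonneg_left hdist hcoef
    _ = Metric.diam Y * (ρ⁻¹ * ε + Lft) := mul_comm _ _

theorem stmt13 {n m l : ℕ} (hn : 0 < n) (hm : 0 < m) (hl : 0 < l)
    (X : Set (En n)) (Y : Set (En m))
    (hXne : X.Nonempty) (hXcpt : IsCompact X)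
    (hYne : Y.Nonempty) (hYcpt : IsCompact Y) (hYconv : Convex ℝ Y)
    (ft : En n × En m → ℝ) (gt : En n × En m → En l)
    (ρ μ ε G Lft : ℝ) (hρ : 0 < ρ) (hμ : 0 < μ) (hε : 0 < ε) (hG : 0 < G) (hLft : 0 ≤ Lft)
    (x : En n) (hx : x ∈ X) (z : En m) (hz : z ∈ Y)
    -- `f̃(x,·)` is convex and `L_f̃`-Lipschitz on Y
    (hftconv : ConvexOn ℝ Y fun z' => ft (x, z'))
    (hftLip : ∀ z' ∈ Y, ∀ z'' ∈ Y, |ft (x, z') - ft (x, z'')| ≤ Lft * ‖z' - z''‖)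
    -- each `g̃ᵢ(x,·)` is convex on Y and differentiable at z with gradient `∇_z g̃ᵢ(x,z)`
    (hgtconv : ∀ i, ConvexOn ℝ Y fun z' => gt (x, z') i)
    (gradg : Fin l → En m)
    (hgrad : ∀ i, HasGradientAt (fun z' => gt (x, z') i) (gradg i) z)
    -- Slater point at x
    (zhat : En m) (hzhat : zhat ∈ Y) (hzhatG : ∀ i, gt (x, zhat) i ≤ -G)
    -- `s` is a subgradient of `f̃(x,·)` at z on Y
    (s : En m)
    (hsub : ∀ z' ∈ Y, ft (x, z) + ⟪s, z' - z⟫ ≤ ft (x, z'))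
    (hnorm : ‖s + (2 * μ) • ∑ i, max (gt (x, z) i) 0 • gradg i‖ ≤ ρ⁻¹ * ε) :
    ‖posPart (gt (x, z))‖ ≤ ∑ i, max (gt (x, z) i) 0 ∧
    ∑ i, max (gt (x, z) i) 0 ≤ (2 * μ * G)⁻¹ * Metric.diam Y * (ρ⁻¹ * ε + Lft) :=
  stmt13_general Y hYcpt ft gt ρ μ ε G Lft hμ hG hLft x z hz hftLip hgtconv gradg hgrad zhat hzhat
    hzhatG s hsub hnorm
end
end

section
/- Let ρ, μ, ε, G > 0 and L_f, L_f̃ ≥ 0, and let x ∈ X and y ∈ Y. Assume: each map y' ↦ g̃_i(x,y') is convex on Y and differentiable at y with gradient ∇_y g̃_i(x,y); there exists ẑ ∈ Y with g̃_i(x,ẑ) ≤ −G for all i; and there exist s, s̃ ∈ ℝᵐ with ‖s‖ ≤ L_f and ‖s̃‖ ≤ L_f̃ such that ‖s + ρ s̃ + 2ρμ Σ_{i=1}^{l} [g̃_i(x,y)]₊ ∇_y g̃_i(x,y)‖ ≤ ε. Then ‖[g̃(x,y)]₊‖ ≤ (2μG)⁻¹ D_Y ( ρ⁻¹ε + ρ⁻¹L_f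 + L_f̃ ). -/
noncomputable section

open Set

open scoped RealInnerProductSpace

/-!
With `d = y - ẑ`, the gradient inequality for the convex `g̃ᵢ(x,·)` at `y`, tested at the Slater
point, gives `g̃ᵢ(x,y) + G ≤ ⟪∇g̃ᵢ, d⟫`. Weighting by `[g̃ᵢ(x,y)]₊` (note `[t]₊ t ≥ 0`) and summing
yields `G ∑ᵢ [g̃ᵢ(x,y)]₊ ≤ ⟪w, d⟫ ≤ ‖w‖ D_Y` for `w = ∑ᵢ [g̃ᵢ(x,y)]₊ ∇g̃ᵢ`, while the triangle
inequality applied to the near-stationarity hypothesis gives `2ρμ ‖w‖ ≤ ε + L_f + ρ L_f̃`.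
Finally `‖[g̃]₊‖₂ ≤ ‖[g̃]₊‖₁`.
-/

open Finset

theorem ConvexOn.le_sub_of_hasFDerivAt {E : Type*} [NormedAddCommGroup E] [NormedSpace ℝ E]
    {s : Set E} {f : E → ℝ} {f' : E →L[ℝ] ℝ} {y z : E} (hf : ConvexOn ℝ s f)
    (hy : y ∈ s) (hz : z ∈ s) (hf' : HasFDerivAt f f' y) : f' (z - y) ≤ f z - f y := by
  set c : ℝ →ᵃ[ℝ] E := AffineMap.lineMap y z
  have hc : HasDerivAt (f ∘ c) (f' (z - y)) 0 := by
    refine HasFDerivAt.comp_hasDerivAt (0 : ℝ) ?_ AffineMap.hasDerivAt_lineMap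
    simpa [c] using hf'
  have hconv : ConvexOn ℝ (Icc 0 1) (f ∘ c) :=
    (hf.comp_affineMap c).subset (hf.1.mapsTo_lineMap hy hz) (convex_Icc 0 1)
  simpa [slope_def_field, c] using hconv.le_slope_of_hasDerivAt (by simp) (by simp) one_pos hc

theorem ConvexOn.inner_le_sub_of_hasGradientAt {E : Type*} [NormedAddCommGroup E]
    [InnerProductSpace ℝ E] [CompleteSpace E] {s : Set E} {f : E → ℝ} {g y z : E}
    (hf : ConvexOn ℝ s f) (hy : y ∈ s) (hz : z ∈ s) (hg : HasGradientAt f g y) :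
    ⟪g, z - y⟫ ≤ f z - f y := by
  simpa using hf.le_sub_of_hasFDerivAt hy hz hg.hasFDerivAt

theorem mul_sum_max_zero_le_inner {ι E : Type*} [Fintype ι] [NormedAddCommGroup E]
    [InnerProductSpace ℝ E] {G : ℝ} {c : ι → ℝ} {g : ι → E} {d : E}
    (h : ∀ i, c i + G ≤ ⟪g i, d⟫) : G * ∑ i, max (c i) 0 ≤ ⟪∑ i, max (c i) 0 • g i, d⟫ := by
  rw [sum_inner, mul_sum]
  refine sum_le_sum fun i _ => ?_
  rw [real_inner_smul_left]
  rcases le_total (c i) 0 with hc | hc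
  · simp [max_eq_right hc]
  · rw [max_eq_left hc]
    nlinarith [h i]

theorem EuclideanSpace.norm_le_sum_norm {𝕜 ι : Type*} [RCLike 𝕜] [Fintype ι]
    (x : EuclideanSpace 𝕜 ι) : ‖x‖ ≤ ∑ i, ‖x i‖ := by
  refine abs_le_of_sq_le_sq' ?_ (by positivity) |>.2
  rw [EuclideanSpace.norm_sq_eq]
  exact sum_sq_le_sq_sum_of_nonneg fun _ _ => norm_nonneg _

theorem norm_posPart_le_sum {l : ℕ} (v : En l) : ‖posPart v‖ ≤ ∑ i, max (v i) 0 := by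
  refine (EuclideanSpace.norm_le_sum_norm _).trans_eq (sum_congr rfl fun i _ => ?_)
  exact abs_of_nonneg (le_max_right _ _)

theorem norm_smul_le_of_norm_add_smul_le {E : Type*} [SeminormedAddCommGroup E]
    [NormedSpace ℝ E] {s t w : E} {ρ c ε : ℝ} (h : ‖s + ρ • t + c • w‖ ≤ ε) : ‖c • w‖ ≤ ε + ‖s‖ + |ρ| * ‖t‖ := by
  rw [show c • w = (s + ρ • t + c • w) - s - ρ • t by abel]
  refine (norm_sub_le _ _).trans ?_
  grw [norm_sub_le, h, norm_smul, Real.norm_eq_abs]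

theorem stmt14_general {n m l : ℕ} (Y : Set (En m)) (hYcpt : IsCompact Y) (gt : En n × En m → En l)
    (ρ μ ε G Lf Lft : ℝ) (hρ : 0 < ρ) (hμ : 0 < μ) (hG : 0 < G)
    (x : En n) (y : En m) (hy : y ∈ Y)
    -- each `g̃ᵢ(x,·)` is convex on Y and differentiable at y with gradient `∇_y g̃ᵢ(x,y)`
    (hgtconv : ∀ i, ConvexOn ℝ Y fun y' => gt (x, y') i)
    (gradg : Fin l → En m)
    (hgrad : ∀ i, HasGradientAt (fun y' => gt (x, y') i) (gradg i) y)
    -- Slater point at x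
    (zhat : En m) (hzhat : zhat ∈ Y) (hzhatG : ∀ i, gt (x, zhat) i ≤ -G)
    (s st : En m) (hs : ‖s‖ ≤ Lf) (hst : ‖st‖ ≤ Lft)
    (hnorm : ‖s + ρ • st + (2 * ρ * μ) • ∑ i, max (gt (x, y) i) 0 • gradg i‖ ≤ ε) :
    ‖posPart (gt (x, y))‖ ≤
      (2 * μ * G)⁻¹ * Metric.diam Y * (ρ⁻¹ * ε + ρ⁻¹ * Lf + Lft) := by
  set w := ∑ i, max (gt (x, y) i) 0 • gradg i
  have hslater : G * ∑ i, max (gt (x, y) i) 0 ≤ ⟪w, y - zhat⟫ :=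
    mul_sum_max_zero_le_inner fun i => by
      have hgrad_ineq := (hgtconv i).inner_le_sub_of_hasGradientAt hy hzhat (hgrad i)
      rw [← neg_sub, inner_neg_right]
      linarith [hzhatG i]
  have hdiam : ‖y - zhat‖ ≤ Metric.diam Y := by
    rw [← dist_eq_norm]
    exact Metric.dist_le_diam_of_mem hYcpt.isBounded hy hzhat
  have hw : 2 * ρ * μ * ‖w‖ ≤ ε + Lf + ρ * Lft := by
    have hperturb := norm_smul_le_of_norm_add_smul_le hnorm
    rw [norm_smul, Real.norm_of_nonneg (by positivity), abs_of_pos hρ] at hperturb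
    linarith [mul_le_mul_of_nonneg_left hst hρ.le]
  calc ‖posPart (gt (x, y))‖ ≤ ∑ i, max (gt (x, y) i) 0 := norm_posPart_le_sum _
    _ ≤ G⁻¹ * (‖w‖ * Metric.diam Y) := by
      rw [le_inv_mul_iff₀ hG]
      exact hslater.trans ((real_inner_le_norm _ _).trans (by gcongr))
    _ ≤ G⁻¹ * ((2 * ρ * μ)⁻¹ * (ε + Lf + ρ * Lft) * Metric.diam Y) := by
      gcongr
      rwa [le_inv_mul_iff₀ (by positivity)]
    _ = (2 * μ * G)⁻¹ * Metric.diam Y * (ρ⁻¹ * ε + ρ⁻¹ * Lf + Lft) := by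
      field_simp

theorem stmt14 {n m l : ℕ} (hn : 0 < n) (hm : 0 < m) (hl : 0 < l)
    (X : Set (En n)) (Y : Set (En m))
    (hXne : X.Nonempty) (hXcpt : IsCompact X)
    (hYne : Y.Nonempty) (hYcpt : IsCompact Y) (hYconv : Convex ℝ Y)
    (gt : En n × En m → En l)
    (ρ μ ε G Lf Lft : ℝ) (hρ : 0 < ρ) (hμ : 0 < μ) (hε : 0 < ε) (hG : 0 < G)
    (hLf : 0 ≤ Lf) (hLft : 0 ≤ Lft)
    (x : En n) (hx : x ∈ X) (y : En m) (hy : y ∈ Y)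
    -- each `g̃ᵢ(x,·)` is convex on Y and differentiable at y with gradient `∇_y g̃ᵢ(x,y)`
    (hgtconv : ∀ i, ConvexOn ℝ Y fun y' => gt (x, y') i)
    (gradg : Fin l → En m)
    (hgrad : ∀ i, HasGradientAt (fun y' => gt (x, y') i) (gradg i) y)
    -- Slater point at x
    (zhat : En m) (hzhat : zhat ∈ Y) (hzhatG : ∀ i, gt (x, zhat) i ≤ -G)
    (s st : En m) (hs : ‖s‖ ≤ Lf) (hst : ‖st‖ ≤ Lft)
    (hnorm : ‖s + ρ • st + (2 * ρ * μ) • ∑ i, max (gt (x, y) i) 0 • gradg i‖ ≤ ε) :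
    ‖posPart (gt (x, y))‖ ≤
      (2 * μ * G)⁻¹ * Metric.diam Y * (ρ⁻¹ * ε + ρ⁻¹ * Lf + Lft) :=
  stmt14_general Y hYcpt gt ρ μ ε G Lf Lft hρ hμ hG x y hy hgtconv gradg hgrad zhat hzhat hzhatG s
    st hs hst hnorm
end
end
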